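/- arXiv:1011.1443 — 6 statements merged into one kernel-verified Lean document; each statement's English description precedes it below -/
import Mathlib

section
/- If H is a subdivision of a star graph K_{1,r}, then every subdivision of H contains H as a subgraph. -/
open SimpleGraph

/-- The degree of a vertex: the cardinality of its neighbor set. -/
noncomputable def degN (G : SimpleGraph ℕ) (v : ℕ) : ℕ := (G.neighborSet v).ncard

/-- An edge of `G` is *internal* if it lies on a cycle or on a path joining two
vertices of degree at least 3. -/
def InternalEdge (G : SimpleGraph ℕ) (e : Sym2 ℕ) : Prop :=
  e ∈ G.edgeSet ∧
    ((∃ (v : ℕ) (c : G.Walk v v), c.IsCycle ∧ e ∈ c.edges) ∨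
     (∃ (a b : ℕ) (p : G.Walk a b), p.IsPath ∧ e ∈ p.edges ∧
        3 ≤ degN G a ∧ 3 ≤ degN G b))

/-- `beta G` is the number of internal edges of `G`. -/
noncomputable def beta (G : SimpleGraph ℕ) : ℕ := {e | InternalEdge G e}.ncard

/-- `G` is obtained from `H` by one elementary subdivision: an edge `(u,v)` is
replaced by the two edges `(u,w)`, `(w,v)`, where `w` is a fresh (isolated)
vertex. -/
def ElemSubdiv (H G : SimpleGraph ℕ) : Prop :=
  ∃ u v w : ℕ, H.Adj u v ∧ H.neighborSet w = ∅ ∧ w ≠ u ∧ w ≠ v ∧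
    G = SimpleGraph.fromEdgeSet ((H.edgeSet \ {s(u, v)}) ∪ {s(u, w), s(w, v)})

/-- `G` is a subdivision of `H` if it is obtained from `H` by finitely many
elementary subdivisions. -/
def IsSubdivision (H G : SimpleGraph ℕ) : Prop := Relation.ReflTransGen ElemSubdiv H G

/-- `H` is (isomorphic to) a subgraph of `G`: there is an injective graph
homomorphism `H →g G`. -/
def SubgraphOf {V W : Type*} (H : SimpleGraph V) (G : SimpleGraph W) : Prop :=
  ∃ f : H →g G, Function.Injective f

/-- `H` is a topological minor of `G`: some subdivision of `H` is a subgraph of `G`. -/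
def TopMinorOf (H G : SimpleGraph ℕ) : Prop :=
  ∃ H' : SimpleGraph ℕ, IsSubdivision H H' ∧ SubgraphOf H' G

/-- `H` is a minor of `G`: there are pairwise disjoint nonempty connected branch
sets in `G`, one for each vertex of `H`, with an edge of `G` between the branch
sets of any two adjacent vertices of `H`. -/
def MinorOf {V W : Type*} (H : SimpleGraph V) (G : SimpleGraph W) : Prop :=
  ∃ φ : V → Set W,
    (∀ v, (φ v).Nonempty) ∧
    (∀ v, (G.induce (φ v)).Connected) ∧
    (∀ u v, u ≠ v → Disjoint (φ u) (φ v)) ∧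
    (∀ u v, H.Adj u v → ∃ a ∈ φ u, ∃ b ∈ φ v, G.Adj a b)

/-- The star `K_{1,r}` on vertex set `ℕ`: center `0` adjacent to `1, …, r`. -/
def starN (r : ℕ) : SimpleGraph ℕ :=
  SimpleGraph.fromEdgeSet {e | ∃ i : ℕ, 1 ≤ i ∧ i ≤ r ∧ e = s(0, i)}

/-! A subdivision of `K_{1,r}` is a spider: `r` paths (legs) leaving a common center and
meeting only there. Subdividing an edge `ab` of a spider, `a` nearer the center, gives again a
spider, and the old spider embeds into the new one: rotate the vertices `b, …` beyond `a` on that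
leg together with the new vertex `w`, so that every vertex from `b` on moves to its predecessor in
the lengthened leg `…, a, w, b, …`. Composing these embeddings along the subdivision sequence
embeds `H` into `G`. -/

namespace List

variable {α β : Type*}

def chainEdges : List α → List (Sym2 α)
  | a :: b :: l => s(a, b) :: chainEdges (b :: l)
  | _ => []

@[simp] lemma chainEdges_singleton (a : α) : chainEdges [a] = [] := rfl
@[simp] lemma chainEdges_cons_cons (a b : α) (l : List α) :
    chainEdges (a :: b :: l) = s(a, b) :: chainEdges (b :: l) := rfl

lemma chainEdges_append_cons_cons (l₁ : List α) (a b : α) (l₂ : List α) :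
    chainEdges (l₁ ++ a :: b :: l₂) =
      chainEdges (l₁ ++ [a]) ++ s(a, b) :: chainEdges (b :: l₂) := by
  induction l₁ with
  | nil => rfl
  | cons x l₁ ih => cases l₁ <;> simp_all

lemma exists_eq_append_of_mem_chainEdges {e : Sym2 α} :
    ∀ {l : List α}, e ∈ chainEdges l → ∃ l₁ a b l₂, l = l₁ ++ a :: b :: l₂ ∧ e = s(a, b)
  | a :: b :: l, h => by
    rcases mem_cons.mp h with rfl | h
    · exact ⟨[], a, b, l, rfl, rfl⟩
    · obtain ⟨l₁, c, d, l₂, hl, rfl⟩ := exists_eq_append_of_mem_chainEdges h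
      exact ⟨a :: l₁, c, d, l₂, by rw [hl, cons_append], rfl⟩

lemma mem_of_mem_chainEdges {l : List α} {e : Sym2 α} {x : α} (he : e ∈ chainEdges l)
    (hx : x ∈ e) : x ∈ l := by
  obtain ⟨l₁, a, b, l₂, rfl, rfl⟩ := exists_eq_append_of_mem_chainEdges he
  rcases Sym2.mem_iff.mp hx with rfl | rfl <;> simp

lemma not_isDiag_of_mem_chainEdges {l : List α} (hl : l.Nodup) {e : Sym2 α}
    (he : e ∈ chainEdges l) : ¬ e.IsDiag := by
  obtain ⟨l₁, a, b, l₂, rfl, rfl⟩ := exists_eq_append_of_mem_chainEdges he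
  have hab : a ∉ b :: l₂ := (nodup_cons.mp (nodup_append.mp hl).2.1).1
  rw [Sym2.mk_isDiag_iff]
  rintro rfl
  exact hab mem_cons_self

lemma nodup_chainEdges : ∀ {l : List α}, l.Nodup → (chainEdges l).Nodup
  | [], _ | [_], _ => nodup_nil
  | a :: b :: l, hl => by
    rw [chainEdges_cons_cons, nodup_cons]
    exact ⟨fun h => (nodup_cons.mp hl).1 (mem_of_mem_chainEdges h (Sym2.mem_mk_left a b)),
      nodup_chainEdges hl.of_cons⟩

lemma exists_mem_chainEdges_of_mem : ∀ {l : List α}, 2 ≤ l.length → ∀ {x : α}, x ∈ l →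
    ∃ y, s(x, y) ∈ chainEdges l
  | a :: b :: l, _, x, hx => by
    rcases mem_cons.mp hx with rfl | hx
    · exact ⟨b, mem_cons_self⟩
    cases l with
    | nil =>
      obtain rfl := mem_singleton.mp hx
      exact ⟨a, by simp [Sym2.eq_swap]⟩
    | cons c l =>
      obtain ⟨y, hy⟩ := exists_mem_chainEdges_of_mem (by simp) hx
      exact ⟨y, mem_cons_of_mem _ hy⟩

lemma chainEdges_map (f : α → β) : ∀ l : List α,
    chainEdges (l.map f) = (chainEdges l).map (Sym2.map f)
  | [] | [_] => rfl
  | a :: b :: l => by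
    rw [map_cons, map_cons, chainEdges_cons_cons, ← map_cons, chainEdges_map f (b :: l)]
    rfl

lemma chainEdges_subset_append : ∀ (l₁ l₂ : List α), chainEdges l₁ ⊆ chainEdges (l₁ ++ l₂)
  | [], _ | [_], _ => nil_subset _
  | _ :: b :: l, l₂ => cons_subset_cons _ (chainEdges_subset_append (b :: l) l₂)

lemma perm_append_cons_cons (l₁ l₂ : List α) (a w : α) :
    l₁ ++ a :: w :: l₂ ~ w :: (l₁ ++ a :: l₂) := by
  simpa using perm_middle (l₁ := l₁ ++ [a]) (l₂ := l₂) (a := w)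

lemma map_formPerm [DecidableEq α] {l : List α} (hl : l.Nodup) :
    l.map l.formPerm = l.rotate 1 :=
  ext_getElem (by simp) fun k _ _ => by simp [formPerm_apply_getElem _ hl, getElem_rotate]

lemma map_inv_formPerm_concat [DecidableEq α] {a : α} {l : List α} (hl : (a :: l).Nodup) :
    (l ++ [a]).map ⇑(formPerm (a :: l))⁻¹ = a :: l := by
  have h := map_formPerm hl
  rw [rotate_cons_succ, rotate_zero] at h
  rw [← h, map_map]
  simp

end List

lemma SubgraphOf.refl {V : Type*} (G : SimpleGraph V) : SubgraphOf G G :=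
  ⟨Hom.id, Function.injective_id⟩

lemma SubgraphOf.trans {U V W : Type*} {G₁ : SimpleGraph U} {G₂ : SimpleGraph V}
    {G₃ : SimpleGraph W} (h₁ : SubgraphOf G₁ G₂) (h₂ : SubgraphOf G₂ G₃) : SubgraphOf G₁ G₃ :=
  let ⟨f, hf⟩ := h₁
  let ⟨g, hg⟩ := h₂
  ⟨g.comp f, hg.comp hf⟩

lemma subgraphOf_fromEdgeSet {V W : Type*} {E : Set (Sym2 V)} {F : Set (Sym2 W)} (f : V → W)
    (hf : Function.Injective f) (hE : ∀ e ∈ E, e.map f ∈ F) :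
    SubgraphOf (fromEdgeSet E) (fromEdgeSet F) :=
  ⟨⟨f, fun hxy => (fromEdgeSet_adj F).mpr
    ⟨hE _ ((fromEdgeSet_adj E).mp hxy).1, hf.ne ((fromEdgeSet_adj E).mp hxy).2⟩⟩, hf⟩

structure Spider (V ι : Type*) where
  center : V
  leg : ι → List V
  head?_leg : ∀ i, (leg i).head? = some center
  two_le_length_leg : ∀ i, 2 ≤ (leg i).length
  nodup_leg : ∀ i, (leg i).Nodup
  eq_center_of_mem_leg : ∀ ⦃i j x⦄, i ≠ j → x ∈ leg i → x ∈ leg j → x = center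

namespace Spider

section

variable {V ι : Type*} (s : Spider V ι)

def edgeSet : Set (Sym2 V) := ⋃ i, {e | e ∈ (s.leg i).chainEdges}

def graph : SimpleGraph V := fromEdgeSet s.edgeSet

lemma edgeSet_graph : s.graph.edgeSet = s.edgeSet := by
  rw [graph, edgeSet_fromEdgeSet, sdiff_eq_left, Set.disjoint_left]
  rintro e ⟨-, ⟨i, rfl⟩, he⟩
  exact List.not_isDiag_of_mem_chainEdges (s.nodup_leg i) he

lemma neighborSet_nonempty_of_mem_leg {i : ι} {x : V} (hx : x ∈ s.leg i) :
    (s.graph.neighborSet x).Nonempty := by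
  obtain ⟨y, hy⟩ := List.exists_mem_chainEdges_of_mem (s.two_le_length_leg i) hx
  refine ⟨y, (fromEdgeSet_adj _).mpr ⟨Set.mem_iUnion.mpr ⟨i, hy⟩, ?_⟩⟩
  exact fun hxy => List.not_isDiag_of_mem_chainEdges (s.nodup_leg i) hy (hxy ▸ rfl)

lemma center_notMem_of_leg_eq {i : ι} {l₁ l₂ : List V} {a : V}
    (h : s.leg i = l₁ ++ a :: l₂) : s.center ∉ l₂ := by
  have hnd := s.nodup_leg i
  have hc : s.center ∈ l₁ ++ [a] := by
    have := s.head?_leg i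
    rw [h] at this
    cases l₁ <;> simp_all
  rw [h, ← List.singleton_append, ← List.append_assoc] at hnd
  exact List.disjoint_of_nodup_append hnd hc

def subdivide [DecidableEq ι] {i : ι} {l₁ l₂ : List V} {a : V} (hi : s.leg i = l₁ ++ a :: l₂)
    (w : V) (hw : ∀ j, w ∉ s.leg j) : Spider V ι where
  center := s.center
  leg := Function.update s.leg i (l₁ ++ a :: w :: l₂)
  head?_leg j := by
    rcases eq_or_ne j i with rfl | hj
    · rw [Function.update_self, ← s.head?_leg j, hi]
      cases l₁ <;> rfl
    · rw [Function.update_of_ne hj, s.head?_leg]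
  two_le_length_leg j := by
    rcases eq_or_ne j i with rfl | hj
    · rw [Function.update_self, List.length_append, List.length_cons, List.length_cons]
      omega
    · rw [Function.update_of_ne hj]; exact s.two_le_length_leg j
  nodup_leg j := by
    rcases eq_or_ne j i with rfl | hj
    · rw [Function.update_self, (List.perm_append_cons_cons _ _ _ _).nodup_iff, ← hi,
        List.nodup_cons]
      exact ⟨hw j, s.nodup_leg j⟩
    · rw [Function.update_of_ne hj]; exact s.nodup_leg j
  eq_center_of_mem_leg j k x hjk hxj hxk := by
    have hmem : ∀ j, x ∈ Function.update s.leg i (l₁ ++ a :: w :: l₂) j →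
        x = w ∧ j = i ∨ x ∈ s.leg j := by
      intro j hx
      rcases eq_or_ne j i with rfl | hj
      · rw [Function.update_self, (List.perm_append_cons_cons _ _ _ _).mem_iff, ← hi,
          List.mem_cons] at hx
        tauto
      · rw [Function.update_of_ne hj] at hx; exact Or.inr hx
    rcases hmem j hxj with ⟨rfl, rfl⟩ | hxj'
    · rcases hmem k hxk with ⟨-, rfl⟩ | hxk'
      · exact absurd rfl hjk
      · exact absurd hxk' (hw k)
    rcases hmem k hxk with ⟨rfl, -⟩ | hxk'
    · exact absurd hxj' (hw j)
    · exact s.eq_center_of_mem_leg hjk hxj' hxk'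

section subdivide

variable [DecidableEq ι] {i : ι} {l₁ l₂ : List V} {a : V}

lemma leg_subdivide_self (hi : s.leg i = l₁ ++ a :: l₂) (w : V) (hw : ∀ j, w ∉ s.leg j) :
    (s.subdivide hi w hw).leg i = l₁ ++ a :: w :: l₂ :=
  Function.update_self ..

lemma leg_subdivide_of_ne (hi : s.leg i = l₁ ++ a :: l₂) (w : V) (hw : ∀ j, w ∉ s.leg j)
    {j : ι} (hj : j ≠ i) : (s.subdivide hi w hw).leg j = s.leg j :=
  Function.update_of_ne hj ..

lemma edgeSet_subdivide {b : V} (hi : s.leg i = l₁ ++ a :: b :: l₂) (w : V)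
    (hw : ∀ j, w ∉ s.leg j) :
    (s.subdivide hi w hw).edgeSet = (s.edgeSet \ {s(a, b)}) ∪ {s(a, w), s(w, b)} := by
  have hab_of_ne : ∀ j ≠ i, s(a, b) ∉ (s.leg j).chainEdges := by
    intro j hj hab
    have hbj := List.mem_of_mem_chainEdges hab (Sym2.mem_mk_right a b)
    have hbi : b ∈ s.leg i := by simp [hi]
    have hbc := s.eq_center_of_mem_leg hj hbj hbi
    exact s.center_notMem_of_leg_eq hi (hbc ▸ List.mem_cons_self)
  have hnd := List.nodup_chainEdges (s.nodup_leg i)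
  rw [hi, List.chainEdges_append_cons_cons] at hnd
  have hab_left : s(a, b) ∉ (l₁ ++ [a]).chainEdges :=
    fun h => List.disjoint_of_nodup_append hnd h List.mem_cons_self
  have hab_right : s(a, b) ∉ (b :: l₂).chainEdges :=
    (List.nodup_cons.mp (List.nodup_append.mp hnd).2.1).1
  have hmem_chainEdges : ∀ j e, e ∈ ((s.subdivide hi w hw).leg j).chainEdges ↔
      (e ∈ (s.leg j).chainEdges ∧ e ≠ s(a, b)) ∨ (j = i ∧ (e = s(a, w) ∨ e = s(w, b))) := by
    intro j e
    rcases eq_or_ne j i with rfl | hj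
    · rw [leg_subdivide_self, hi, List.chainEdges_append_cons_cons, List.chainEdges_cons_cons,
        List.chainEdges_append_cons_cons]
      simp only [List.mem_append, List.mem_cons]
      aesop
    · rw [leg_subdivide_of_ne _ _ _ _ hj]
      have := hab_of_ne j hj
      aesop
  ext e
  simp only [edgeSet, Set.mem_iUnion, Set.mem_ofPred_eq, hmem_chainEdges, Set.mem_union,
    Set.mem_sdiff, Set.mem_insert_iff, Set.mem_singleton_iff]
  aesop

lemma subgraphOf_subdivide [DecidableEq V] (hi : s.leg i = l₁ ++ a :: l₂) (w : V)
    (hw : ∀ j, w ∉ s.leg j) : SubgraphOf s.graph (s.subdivide hi w hw).graph := by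
  set σ := (List.formPerm (w :: l₂))⁻¹
  have hσ : ∀ x ∉ w :: l₂, σ x = x := fun x hx => by
    rw [Equiv.Perm.inv_eq_iff_eq, List.formPerm_apply_of_notMem hx]
  have hnd := s.nodup_leg i
  rw [hi, ← List.singleton_append, ← List.append_assoc] at hnd
  have hwl₂ : (w :: l₂).Nodup :=
    List.nodup_cons.mpr ⟨fun h => hw i (by simp [hi, h]), (List.nodup_append.mp hnd).2.1⟩
  have hfix : (l₁ ++ [a]).map σ = l₁ ++ [a] := by
    refine (List.map_congr_left fun x hx => hσ x fun hx' => ?_).trans (List.map_id _)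
    rcases List.mem_cons.mp hx' with rfl | hx₂
    · refine hw i ?_
      rw [hi, ← List.singleton_append, ← List.append_assoc]
      exact List.mem_append_left _ hx
    · exact List.disjoint_of_nodup_append hnd hx hx₂
  have hmap : ∀ j, ∃ l : List V, (s.leg j).chainEdges ⊆ l.chainEdges ∧
      l.map σ = (s.subdivide hi w hw).leg j := by
    intro j
    rcases eq_or_ne j i with rfl | hj
    · refine ⟨s.leg j ++ [w], List.chainEdges_subset_append _ _, ?_⟩
      rw [leg_subdivide_self, hi, show l₁ ++ a :: l₂ ++ [w] = (l₁ ++ [a]) ++ (l₂ ++ [w]) by simp,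
        List.map_append, List.map_inv_formPerm_concat hwl₂, hfix]
      simp
    · refine ⟨s.leg j, List.Subset.refl _, ?_⟩
      rw [leg_subdivide_of_ne _ _ _ _ hj]
      refine (List.map_congr_left fun x hx => hσ x fun hx' => ?_).trans (List.map_id _)
      rcases List.mem_cons.mp hx' with rfl | hx₂
      · exact hw j hx
      · have hxc := s.eq_center_of_mem_leg hj hx (by simp [hi, hx₂])
        exact s.center_notMem_of_leg_eq hi (hxc ▸ hx₂)
  refine subgraphOf_fromEdgeSet σ σ.injective ?_
  rintro e ⟨-, ⟨j, rfl⟩, he⟩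
  obtain ⟨l, hl, hlσ⟩ := hmap j
  refine Set.mem_iUnion.mpr ⟨j, ?_⟩
  show _ ∈ List.chainEdges _
  rw [← hlσ, List.chainEdges_map]
  exact List.mem_map_of_mem (hl he)

end subdivide

end

variable {ι : Type*}

lemma exists_graph_eq_and_subgraphOf_of_elemSubdiv (s : Spider ℕ ι) {G : SimpleGraph ℕ}
    (h : ElemSubdiv s.graph G) : ∃ s' : Spider ℕ ι, s'.graph = G ∧ SubgraphOf s.graph G := by
  classical
  obtain ⟨u, v, w, huv, hw, -, -, rfl⟩ := h
  have huv' : s(u, v) ∈ s.edgeSet := s.edgeSet_graph ▸ huv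
  obtain ⟨i, hi⟩ := Set.mem_iUnion.mp huv'
  obtain ⟨l₁, a, b, l₂, hi, hab⟩ := List.exists_eq_append_of_mem_chainEdges hi
  have hw' : ∀ j, w ∉ s.leg j := fun j hj => by
    simpa [hw] using s.neighborSet_nonempty_of_mem_leg hj
  have hG : (s.subdivide hi w hw').graph =
      fromEdgeSet ((s.graph.edgeSet \ {s(u, v)}) ∪ {s(u, w), s(w, v)}) := by
    have hpair : ({s(a, w), s(w, b)} : Set (Sym2 ℕ)) = {s(u, w), s(w, v)} := by
      rcases Sym2.eq_iff.mp hab with ⟨rfl, rfl⟩ | ⟨rfl, rfl⟩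
      · rfl
      · rw [Set.pair_comm, Sym2.eq_swap, Sym2.eq_swap (a := v)]
    rw [graph, edgeSet_subdivide, edgeSet_graph, hab, hpair]
  exact ⟨_, hG, hG ▸ s.subgraphOf_subdivide hi w hw'⟩

lemma exists_graph_eq_and_subgraphOf_of_isSubdivision (s : Spider ℕ ι) {G : SimpleGraph ℕ}
    (h : IsSubdivision s.graph G) : ∃ s' : Spider ℕ ι, s'.graph = G ∧ SubgraphOf s.graph G := by
  induction h with
  | refl => exact ⟨s, rfl, SubgraphOf.refl _⟩
  | tail _ hstep ih =>
    obtain ⟨s', rfl, hs'⟩ := ih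
    obtain ⟨s'', hs'', hsub⟩ := s'.exists_graph_eq_and_subgraphOf_of_elemSubdiv hstep
    exact ⟨s'', hs'', hs'.trans hsub⟩

def star (r : ℕ) : Spider ℕ (Fin r) where
  center := 0
  leg i := [0, i + 1]
  head?_leg _ := rfl
  two_le_length_leg _ := le_rfl
  nodup_leg _ := by simp
  eq_center_of_mem_leg i j x hij hi hj := by
    simp only [List.mem_cons, List.not_mem_nil, or_false] at hi hj
    omega

lemma graph_star (r : ℕ) : (star r).graph = starN r := by
  rw [graph, starN]
  congr 1
  ext e
  simp only [edgeSet, star, Set.mem_iUnion, Set.mem_ofPred_eq, List.chainEdges_cons_cons,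
    List.chainEdges_singleton, List.mem_singleton]
  constructor
  · rintro ⟨i, rfl⟩
    exact ⟨i + 1, by omega, i.isLt, rfl⟩
  · rintro ⟨i, hi₁, hi₂, rfl⟩
    exact ⟨⟨i - 1, by omega⟩, by simp [Nat.sub_add_cancel hi₁]⟩

end Spider

/-- If `H` is a subdivision of a star `K_{1,r}`, then every subdivision of `H`
contains `H` as a subgraph. -/
theorem subdivision_of_star_subgraph_of_subdivision (r : ℕ) (H G : SimpleGraph ℕ)
    (hH : IsSubdivision (starN r) H) (hG : IsSubdivision H G) :
    SubgraphOf H G := by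
  rw [← Spider.graph_star] at hH
  obtain ⟨s, rfl, -⟩ := (Spider.star r).exists_graph_eq_and_subgraphOf_of_isSubdivision hH
  obtain ⟨-, -, hsub⟩ := s.exists_graph_eq_and_subgraphOf_of_isSubdivision hG
  exact hsub
end

section
/- Let β(G) be the number of internal edges of G (edges lying on a cycle or on a path between two vertices of degree ≥ 3). If G is obtained from H by an elementary subdivision, then β(H) ≤ β(G). -/
open SimpleGraph

/-! Send every edge of `H` to itself, except `s(u, v)`, which goes to `s(u, w)`; this is
injective because `w` is isolated in `H`. A walk of `H` transfers to `G` by detouring through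
`w` wherever it used `u – v`. Cycles of `H`, and paths of `H` between vertices of degree at
least 3, avoid the isolated vertex `w`, so they transfer to cycles and paths; every vertex but
`w` keeps its degree (its neighbour `v` or `u` is traded for `w`). Hence internal edges go to
internal edges, and finiteness of `H` turns the injection into the inequality of counts. -/

namespace SimpleGraph

variable {V : Type*} {H : SimpleGraph V} {u v w a b : V}

lemma notMem_of_mem_edgeSet_of_forall_not_adj (hw : ∀ x, ¬H.Adj w x) {e : Sym2 V}
    (he : e ∈ H.edgeSet) : w ∉ e := by
  induction e using Sym2.ind with
  | h x y =>
    rw [Sym2.mem_iff]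
    rintro (rfl | rfl)
    exacts [hw y he, hw x he.symm]

lemma Walk.notMem_support_of_forall_not_adj (hw : ∀ x, ¬H.Adj w x) (p : H.Walk a b)
    (hb : b ≠ w) : w ∉ p.support := by
  rw [mem_support_iff_exists_mem_edges]
  rintro (rfl | ⟨e, he, hwe⟩)
  exacts [hb rfl, notMem_of_mem_edgeSet_of_forall_not_adj hw (p.edges_subset_edgeSet he) hwe]

def subdivideEdge (H : SimpleGraph V) (u v w : V) : SimpleGraph V :=
  fromEdgeSet ((H.edgeSet \ {s(u, v)}) ∪ {s(u, w), s(w, v)})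

lemma subdivideEdge_adj_left (hwu : w ≠ u) : (H.subdivideEdge u v w).Adj u w := by
  simp [subdivideEdge, hwu.symm]

lemma subdivideEdge_adj_right (hwv : w ≠ v) : (H.subdivideEdge u v w).Adj w v := by
  simp [subdivideEdge, hwv]

lemma subdivideEdge_adj_of_adj (h : H.Adj a b) (he : s(a, b) ≠ s(u, v)) :
    (H.subdivideEdge u v w).Adj a b := by
  simp [subdivideEdge, h, he, h.ne]

lemma finite_edgeSet_subdivideEdge (hH : H.edgeSet.Finite) :
    (H.subdivideEdge u v w).edgeSet.Finite :=
  (hH.sdiff.union (Set.toFinite _)).subset <| by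
    rw [subdivideEdge, edgeSet_fromEdgeSet]
    exact Set.sdiff_subset

lemma neighborSet_subdivideEdge [DecidableEq V] (huv : H.Adj u v) (hw : ∀ x, ¬H.Adj w x)
    (haw : a ≠ w) : (H.subdivideEdge u v w).neighborSet a =
      (fun x => if s(a, x) = s(u, v) then w else x) '' H.neighborSet a := by
  ext y
  simp only [mem_neighborSet, Set.mem_image, subdivideEdge, fromEdgeSet_adj, Set.mem_union,
    Set.mem_insert_iff, Set.mem_singleton_iff, Set.mem_sdiff, mem_edgeSet]
  constructor
  · rintro ⟨⟨hy, hyuv⟩ | hy | hy, -⟩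
    · exact ⟨y, hy, if_neg hyuv⟩
    · obtain ⟨rfl, rfl⟩ : a = u ∧ y = w := by simpa [haw] using hy
      exact ⟨v, huv, if_pos rfl⟩
    · obtain ⟨rfl, rfl⟩ : a = v ∧ y = w := by simpa [haw] using hy
      exact ⟨u, huv.symm, if_pos Sym2.eq_swap⟩
  · rintro ⟨x, hx, rfl⟩
    split_ifs with hxuv
    · refine ⟨Or.inr ?_, haw⟩
      rcases Sym2.eq_iff.1 hxuv with ⟨rfl, rfl⟩ | ⟨rfl, rfl⟩ <;> simp
    · exact ⟨Or.inl ⟨hx, hxuv⟩, hx.ne⟩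

lemma ncard_neighborSet_subdivideEdge (huv : H.Adj u v) (hw : ∀ x, ¬H.Adj w x) (haw : a ≠ w) :
    ((H.subdivideEdge u v w).neighborSet a).ncard = (H.neighborSet a).ncard := by
  classical
  rw [neighborSet_subdivideEdge huv hw haw]
  refine Set.InjOn.ncard_image fun x (hx : H.Adj a x) y (hy : H.Adj a y) hxy => ?_
  split_ifs at hxy with hxuv hyuv hyuv
  · exact Sym2.congr_right.1 (hxuv.trans hyuv.symm)
  · exact (hw a (hxy ▸ hy).symm).elim
  · exact (hw a (hxy ▸ hx).symm).elim
  · exact hxy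

def subdividedEdge [DecidableEq V] (u v w : V) (e : Sym2 V) : Sym2 V :=
  if e = s(u, v) then s(u, w) else e

lemma injOn_subdividedEdge [DecidableEq V] (hw : ∀ x, ¬H.Adj w x) :
    Set.InjOn (subdividedEdge u v w) H.edgeSet := by
  intro e he f hf h
  unfold subdividedEdge at h
  split_ifs at h with heuv hfuv hfuv
  · rw [heuv, hfuv]
  · exact (notMem_of_mem_edgeSet_of_forall_not_adj hw hf (h ▸ Sym2.mem_mk_right u w)).elim
  · exact (notMem_of_mem_edgeSet_of_forall_not_adj hw he (h ▸ Sym2.mem_mk_right u w)).elim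
  · exact h

lemma adj_and_adj_of_sym2_eq {c : V} (huw : H.Adj u w) (hwv : H.Adj w v)
    (he : s(a, c) = s(u, v)) : H.Adj a w ∧ H.Adj w c := by
  rcases Sym2.eq_iff.1 he with ⟨rfl, rfl⟩ | ⟨rfl, rfl⟩
  · exact ⟨huw, hwv⟩
  · exact ⟨hwv.symm, huw.symm⟩

namespace Walk

variable {G : SimpleGraph V}

variable [DecidableEq V] (huw : G.Adj u w) (hwv : G.Adj w v)
  (hkeep : ∀ ⦃a b⦄, H.Adj a b → s(a, b) ≠ s(u, v) → G.Adj a b)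

def subdivide : ∀ {a b : V}, H.Walk a b → G.Walk a b
  | _, _, nil => nil
  | a, _, cons (v := c) h p =>
    if he : s(a, c) = s(u, v) then
      have hadj := adj_and_adj_of_sym2_eq huw hwv he
      cons hadj.1 (cons hadj.2 (subdivide p))
    else cons (hkeep h he) (subdivide p)

lemma subdividedEdge_mem_edges_subdivide {a b : V} (p : H.Walk a b) {e : Sym2 V}
    (he : e ∈ p.edges) : subdividedEdge u v w e ∈ (p.subdivide huw hwv hkeep).edges := by
  induction p with
  | nil => simp at he
  | @cons a c _ h p ih =>
    rw [edges_cons, List.mem_cons] at he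
    rcases he with rfl | he
    · by_cases huv : s(a, c) = s(u, v)
      · rw [subdivide, dif_pos huv, subdividedEdge, if_pos huv]
        rcases Sym2.eq_iff.1 huv with ⟨rfl, rfl⟩ | ⟨rfl, rfl⟩ <;> simp [Sym2.eq_swap]
      · rw [subdivide, dif_neg huv, subdividedEdge, if_neg huv]
        simp
    · rw [subdivide]
      split_ifs <;> simp [ih he]

lemma mem_edges_subdivide {a b : V} (p : H.Walk a b) {e : Sym2 V}
    (he : e ∈ (p.subdivide huw hwv hkeep).edges) : e ∈ p.edges ∨ w ∈ e := by
  induction p with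
  | nil => simp [subdivide] at he
  | @cons a c _ h p ih =>
    rw [subdivide] at he
    split_ifs at he with huv
    · simp only [edges_cons, List.mem_cons] at he
      rcases he with rfl | rfl | he
      · simp
      · simp
      · simpa using Or.imp_left Or.inr (ih he)
    · simp only [edges_cons, List.mem_cons] at he
      rcases he with rfl | he
      · simp
      · simpa using Or.imp_left Or.inr (ih he)

lemma mem_support_subdivide {a b : V} (p : H.Walk a b) {x : V}
    (hx : x ∈ (p.subdivide huw hwv hkeep).support) :
    x ∈ p.support ∨ x = w ∧ s(u, v) ∈ p.edges := by
  induction p with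
  | nil => simpa [subdivide] using hx
  | @cons a c _ h p ih =>
    rw [subdivide] at hx
    split_ifs at hx with huv
    · simp only [support_cons, List.mem_cons] at hx
      rcases hx with rfl | rfl | hx
      · simp
      · simp [huv]
      · rcases ih hx with hx | ⟨rfl, hp⟩ <;> simp [*]
    · simp only [support_cons, List.mem_cons] at hx
      rcases hx with rfl | hx
      · simp
      · rcases ih hx with hx | ⟨rfl, hp⟩ <;> simp [*]

lemma IsPath.subdivide {a b : V} {p : H.Walk a b} (hp : p.IsPath) (hw : w ∉ p.support) :
    (p.subdivide huw hwv hkeep).IsPath := by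
  induction p with
  | nil => exact IsPath.nil
  | @cons a c _ h p ih =>
    rw [cons_isPath_iff] at hp
    rw [support_cons, List.mem_cons, not_or] at hw
    have ha : a ∉ (p.subdivide huw hwv hkeep).support := fun ha =>
      (mem_support_subdivide huw hwv hkeep p ha).elim hp.2 fun h => hw.1 h.1.symm
    rw [Walk.subdivide]
    split_ifs with huv
    · have hwp : w ∉ (p.subdivide huw hwv hkeep).support := fun hwp =>
        (mem_support_subdivide huw hwv hkeep p hwp).elim hw.2 fun h =>
          hp.2 (p.fst_mem_support_of_mem_edges (huv ▸ h.2))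
      simp only [cons_isPath_iff, support_cons, List.mem_cons, not_or]
      exact ⟨⟨ih hp.1 hw.2, hwp⟩, Ne.symm hw.1, ha⟩
    · exact (ih hp.1 hw.2).cons ha

lemma IsCycle.subdivide {x : V} {c : H.Walk x x} (hc : c.IsCycle) (hw : w ∉ c.support) :
    (c.subdivide huw hwv hkeep).IsCycle := by
  cases c with
  | nil => exact absurd rfl hc.ne_nil
  | @cons _ y _ h p =>
    rw [cons_isCycle_iff] at hc
    rw [support_cons, List.mem_cons, not_or] at hw
    have hp := hc.1.subdivide huw hwv hkeep hw.2
    rw [Walk.subdivide]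
    split_ifs with huv
    · have hwp : w ∉ (p.subdivide huw hwv hkeep).support := fun hwp =>
        (mem_support_subdivide huw hwv hkeep p hwp).elim hw.2 fun h => hc.2 (huv ▸ h.2)
      refine (cons_isCycle_iff _ _).2 ⟨hp.cons hwp, ?_⟩
      rw [edges_cons, List.mem_cons, not_or]
      refine ⟨fun he => ?_, fun he => hwp (snd_mem_support_of_mem_edges _ he)⟩
      rcases Sym2.eq_iff.1 he with ⟨hxw, -⟩ | ⟨hxy, -⟩
      exacts [hw.1 hxw.symm, h.ne hxy]
    · refine (cons_isCycle_iff _ _).2 ⟨hp, fun he => ?_⟩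
      rcases mem_edges_subdivide huw hwv hkeep p he with he | hwe
      · exact hc.2 he
      · rcases Sym2.mem_iff.1 hwe with rfl | rfl
        · exact hw.1 rfl
        · exact hw.2 p.start_mem_support

end Walk

end SimpleGraph

theorem InternalEdge.subdivideEdge {H : SimpleGraph ℕ} {u v w : ℕ} {e : Sym2 ℕ}
    (he : InternalEdge H e) (huv : H.Adj u v) (hw₀ : H.neighborSet w = ∅) (hwu : w ≠ u)
    (hwv : w ≠ v) : InternalEdge (H.subdivideEdge u v w) (subdividedEdge u v w e) := by
  have hw : ∀ x, ¬H.Adj w x := Set.eq_empty_iff_forall_notMem.1 hw₀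
  have huw' := subdivideEdge_adj_left (H := H) (v := v) hwu
  have hwv' := subdivideEdge_adj_right (H := H) (u := u) hwv
  have hkeep : ∀ ⦃a b⦄, H.Adj a b → s(a, b) ≠ s(u, v) →
      (H.subdivideEdge u v w).Adj a b := fun _ _ => subdivideEdge_adj_of_adj
  have hne : ∀ a, 3 ≤ degN H a → a ≠ w := by
    rintro a ha rfl
    simp [degN, hw₀] at ha
  have hdeg : ∀ a, 3 ≤ degN H a → 3 ≤ degN (H.subdivideEdge u v w) a := fun a ha => by
    rwa [degN, ncard_neighborSet_subdivideEdge huv hw (hne a ha)]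
  rcases he.2 with ⟨x, c, hc, hec⟩ | ⟨a, b, p, hp, hep, ha, hb⟩
  · have hx : x ≠ w := by
      rintro rfl
      exact hw _ (c.adj_snd hc.not_nil)
    have hec' := c.subdividedEdge_mem_edges_subdivide huw' hwv' hkeep hec
    exact ⟨Walk.edges_subset_edgeSet _ hec', .inl ⟨x, _,
      hc.subdivide huw' hwv' hkeep (c.notMem_support_of_forall_not_adj hw hx), hec'⟩⟩
  · have hep' := p.subdividedEdge_mem_edges_subdivide huw' hwv' hkeep hep
    exact ⟨Walk.edges_subset_edgeSet _ hep', .inr ⟨a, b, _,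
      hp.subdivide huw' hwv' hkeep (p.notMem_support_of_forall_not_adj hw (hne b hb)), hep',
      hdeg a ha, hdeg b hb⟩⟩

/-- An elementary subdivision cannot decrease the number of internal edges:
if `G` is obtained from the finite graph `H` by an elementary subdivision,
then `β(H) ≤ β(G)`. -/
theorem beta_le_of_elemSubdiv (H G : SimpleGraph ℕ) (hfin : H.edgeSet.Finite)
    (h : ElemSubdiv H G) : beta H ≤ beta G := by
  obtain ⟨u, v, w, huv, hw, hwu, hwv, rfl⟩ := h
  exact Set.ncard_le_ncard_of_injOn (subdividedEdge u v w)
    (fun e he => he.subdivideEdge huv hw hwu hwv)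
    ((injOn_subdividedEdge (Set.eq_empty_iff_forall_notMem.1 hw)).mono fun e he => he.1)
    ((finite_edgeSet_subdivideEdge hfin).subset fun e he => he.1)
end

section
/- Every nontrivial minor-closed graph property is sparse: if a class of graphs is closed under minors and does not contain all graphs, then there is a constant c such that every graph G in the class satisfies |E(G)| ≤ c·|V(G)|. -/
open SimpleGraph

/-!
Mader's argument, by induction on `k`: a graph whose edges outnumber `(2 ^ k - 1)` times its
vertices has a `K_k` minor. Take such a graph with as few vertices as possible. If some edge `xy`
has fewer than `2 ^ (k + 1) - 1` common neighbours, contracting it costs one vertex and at most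
`2 ^ (k + 1) - 1` edges, so the contraction is still dense and its `K_(k+1)` minor lifts back.
Otherwise the neighbourhood of any non-isolated vertex `x` induces a graph of minimum degree at
least `2 (2 ^ k - 1) + 1`, hence with more than `(2 ^ k - 1) |N(x)|` edges; it has a `K_k` minor,
and `x` is an apex completing it to `K_(k+1)`. A minor-closed class excluding some graph on
`n₀` vertices excludes `K_(n₀)`, so its `n`-vertex members have at most `(2 ^ n₀ - 1) n` edges.
-/

namespace SimpleGraph

universe u

variable {V : Type u} {ι κ : Type*} {G : SimpleGraph V} {x y : V}

structure IsCliqueMinorModel (G : SimpleGraph V) (φ : ι → Set V) : Prop where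
  nonempty : ∀ i, (φ i).Nonempty
  connected : ∀ i, (G.induce (φ i)).Connected
  pairwise_disjoint : Pairwise fun i j ↦ Disjoint (φ i) (φ j)
  exists_adj : Pairwise fun i j ↦ ∃ a ∈ φ i, ∃ b ∈ φ j, G.Adj a b

lemma connected_induce_singleton (G : SimpleGraph V) (v : V) : (G.induce {v}).Connected := by
  rw [induce_singleton_eq_top]
  exact connected_top

namespace IsCliqueMinorModel

variable {φ : ι → Set V}

lemma minorOf_top (h : G.IsCliqueMinorModel φ) : MinorOf (⊤ : SimpleGraph ι) G :=
  ⟨φ, h.nonempty, h.connected, fun _ _ hij ↦ h.pairwise_disjoint hij,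
    fun _ _ hij ↦ h.exists_adj hij.ne⟩

lemma comp_injective (h : G.IsCliqueMinorModel φ) {f : κ → ι} (hf : Function.Injective f) :
    G.IsCliqueMinorModel (φ ∘ f) where
  nonempty i := h.nonempty (f i)
  connected i := h.connected (f i)
  pairwise_disjoint _ _ hij := h.pairwise_disjoint (hf.ne hij)
  exists_adj _ _ hij := h.exists_adj (hf.ne hij)

lemma optionElim (h : G.IsCliqueMinorModel φ) (hx : ∀ i, x ∉ φ i)
    (hadj : ∀ i, ∀ a ∈ φ i, G.Adj x a) :
    G.IsCliqueMinorModel fun o : Option ι ↦ o.elim {x} φ where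
  nonempty
    | none => Set.singleton_nonempty x
    | some i => h.nonempty i
  connected
    | none => G.connected_induce_singleton x
    | some i => h.connected i
  pairwise_disjoint := by
    rintro (_ | i) (_ | j) hij
    · exact absurd rfl hij
    · exact Set.disjoint_singleton_left.mpr (hx j)
    · exact Set.disjoint_singleton_right.mpr (hx i)
    · exact h.pairwise_disjoint fun hij' ↦ hij (congrArg some hij')
  exists_adj := by
    rintro (_ | i) (_ | j) hij
    · exact absurd rfl hij
    · obtain ⟨b, hb⟩ := h.nonempty j
      exact ⟨x, rfl, b, hb, hadj j b hb⟩
    · obtain ⟨a, ha⟩ := h.nonempty i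
      exact ⟨a, ha, x, rfl, (hadj i a ha).symm⟩
    · exact h.exists_adj fun hij' ↦ hij (congrArg some hij')

lemma image_val {s : Set V} {φ : ι → Set s} (h : (G.induce s).IsCliqueMinorModel φ) :
    G.IsCliqueMinorModel fun i ↦ Subtype.val '' φ i where
  nonempty i := (h.nonempty i).image _
  connected i := by
    let f : (G.induce s).induce (φ i) →g G.induce (Subtype.val '' φ i) :=
      ⟨fun a ↦ ⟨a.1.1, a.1, a.2, rfl⟩, id⟩
    refine (h.connected i).map f ?_
    rintro ⟨_, a, ha, rfl⟩
    exact ⟨⟨a, ha⟩, rfl⟩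
  pairwise_disjoint _ _ hij :=
    (Set.disjoint_image_iff Subtype.val_injective).mpr (h.pairwise_disjoint hij)
  exists_adj _ _ hij := by
    obtain ⟨a, ha, b, hb, hab⟩ := h.exists_adj hij
    exact ⟨a, Set.mem_image_of_mem _ ha, b, Set.mem_image_of_mem _ hb, hab⟩

end IsCliqueMinorModel

lemma minorOf_top (H : SimpleGraph V) : MinorOf H (⊤ : SimpleGraph V) :=
  ⟨fun v ↦ {v}, Set.singleton_nonempty, connected_induce_singleton ⊤,
    fun _ _ huv ↦ Set.disjoint_singleton.mpr huv, fun u v huv ↦ ⟨u, rfl, v, rfl, huv.ne⟩⟩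

/-- Contraction of `y` into `x`, keeping `y` as an isolated vertex. -/
def contractEdge (G : SimpleGraph V) (x y : V) : SimpleGraph V :=
  G.deleteIncidenceSet y ⊔ fromEdgeSet ((s(x, ·)) '' G.neighborSet y)

lemma contractEdge_adj {a b : V} :
    (G.contractEdge x y).Adj a b ↔
      G.Adj a b ∧ a ≠ y ∧ b ≠ y ∨ a ≠ b ∧ (a = x ∧ G.Adj y b ∨ b = x ∧ G.Adj y a) := by
  simp only [contractEdge, sup_adj, deleteIncidenceSet_adj, fromEdgeSet_adj, Set.mem_image,
    mem_neighborSet, Sym2.eq_iff]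
  aesop

lemma support_contractEdge_subset (hxy : G.Adj x y) :
    (G.contractEdge x y).support ⊆ G.support \ {y} := by
  rintro a ⟨b, hab⟩
  rcases contractEdge_adj.mp hab with ⟨hab, hay, -⟩ | ⟨-, ⟨rfl, -⟩ | ⟨-, hya⟩⟩
  · exact ⟨⟨b, hab⟩, hay⟩
  · exact ⟨⟨y, hxy⟩, hxy.ne⟩
  · exact ⟨⟨y, hya.symm⟩, hya.ne'⟩

lemma ncard_edgeSet_le_contractEdge [Finite V] :
    G.edgeSet.ncard ≤
      (G.contractEdge x y).edgeSet.ncard + (G.commonNeighbors x y).ncard + 1 := by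
  classical
  set D := G.neighborSet y \ insert x (G.neighborSet x)
  have hsplit :
      G.edgeSet.ncard = (G.edgeSet \ G.incidenceSet y).ncard + (G.neighborSet y).ncard := by
    rw [← Set.ncard_sdiff_add_ncard_of_subset (G.incidenceSet_subset y)]
    congr 1
    simpa only [Nat.card_coe_set_eq] using Nat.card_congr (G.incidenceSetEquivNeighborSet y)
  have hneighbors : (G.neighborSet y).ncard ≤ D.ncard + (G.commonNeighbors x y).ncard + 1 := by
    have hsub : G.neighborSet y ⊆ D ∪ insert x (G.commonNeighbors x y) := by
      intro v hv
      by_cases hvx : v ∈ insert x (G.neighborSet x)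
      · rcases hvx with rfl | hxv
        exacts [Or.inr (Or.inl rfl), Or.inr (Or.inr ⟨hxv, hv⟩)]
      · exact Or.inl ⟨hv, hvx⟩
    calc (G.neighborSet y).ncard ≤ (D ∪ insert x (G.commonNeighbors x y)).ncard :=
          Set.ncard_le_ncard hsub
      _ ≤ D.ncard + (insert x (G.commonNeighbors x y)).ncard := Set.ncard_union_le _ _
      _ ≤ D.ncard + ((G.commonNeighbors x y).ncard + 1) := by grw [Set.ncard_insert_le]
  have hkept : (G.edgeSet \ G.incidenceSet y).ncard + D.ncard ≤
      (G.contractEdge x y).edgeSet.ncard := by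
    rw [← Set.ncard_image_of_injective D fun _ _ ↦ Sym2.congr_right.mp, ← Set.ncard_union_eq]
    · refine Set.ncard_le_ncard (Set.union_subset ?_ ?_)
      · rw [← edgeSet_deleteIncidenceSet]
        exact edgeSet_mono le_sup_left
      · rintro _ ⟨d, ⟨hyd, hd⟩, rfl⟩
        exact contractEdge_adj.mpr (Or.inr ⟨fun hxd ↦ hd (Or.inl hxd.symm), Or.inl ⟨rfl, hyd⟩⟩)
    · refine Set.disjoint_left.mpr ?_
      rintro _ ⟨hxd, -⟩ ⟨d, ⟨-, hd⟩, rfl⟩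
      exact hd (Or.inr hxd)
  omega

lemma connected_induce_insert_of_contractEdge (hxy : G.Adj x y) {A : Set V} (hx : x ∈ A)
    (hy : y ∉ A) (h : ((G.contractEdge x y).induce A).Connected) :
    (G.induce (insert y A)).Connected := by
  let incl : A → ↥(insert y A) := fun a ↦ ⟨a, Or.inr a.2⟩
  have hstep : ∀ a b : A, ((G.contractEdge x y).induce A).Adj a b →
      (G.induce (insert y A)).Reachable (incl a) (incl b) := by
    let y' : ↥(insert y A) := ⟨y, Set.mem_insert y A⟩
    rintro ⟨a, ha⟩ ⟨b, hb⟩ hab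
    rcases contractEdge_adj.mp hab with ⟨hab, -, -⟩ | ⟨-, ⟨rfl, hyb⟩ | ⟨rfl, hya⟩⟩
    · exact Adj.reachable hab
    · exact (Adj.reachable (v := y') hxy).trans (Adj.reachable (u := y') hyb)
    · exact (Adj.reachable (v := y') hya.symm).trans (Adj.reachable (u := y') hxy.symm)
  have hreach : ∀ a b : A, ((G.contractEdge x y).induce A).Reachable a b →
      (G.induce (insert y A)).Reachable (incl a) (incl b) := by
    intro a b hab
    rw [reachable_iff_reflTransGen] at hab ⊢
    exact Relation.ReflTransGen.lift' incl
      (fun a b h ↦ (reachable_iff_reflTransGen _ _).mp (hstep a b h)) a b hab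
  rw [connected_iff_exists_forall_reachable]
  refine ⟨incl ⟨x, hx⟩, ?_⟩
  rintro ⟨b, rfl | hb⟩
  · exact Adj.reachable hxy
  · exact hreach ⟨x, hx⟩ ⟨b, hb⟩ (h.preconnected _ _)

lemma induce_contractEdge_le {A : Set V} (hx : x ∉ A) :
    (G.contractEdge x y).induce A ≤ G.induce A := by
  rintro ⟨a, ha⟩ ⟨b, hb⟩ hab
  rcases contractEdge_adj.mp hab with ⟨hab, -, -⟩ | ⟨-, ⟨rfl, -⟩ | ⟨rfl, -⟩⟩
  exacts [hab, absurd ha hx, absurd hb hx]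

namespace IsCliqueMinorModel

lemma of_contractEdge {φ : ι → Set V} (h : (G.contractEdge x y).IsCliqueMinorModel φ)
    (hxy : G.Adj x y) (hy : ∀ i, y ∉ φ i) :
    ∃ ψ : ι → Set V, G.IsCliqueMinorModel ψ ∧ ∀ i, ψ i ⊆ insert y (φ i) := by
  classical
  set ψ : ι → Set V := fun i ↦ if x ∈ φ i then insert y (φ i) else φ i
  have mem_ψ : ∀ i a, a ∈ ψ i ↔ a = y ∧ x ∈ φ i ∨ a ∈ φ i := by
    intro i a
    by_cases hx : x ∈ φ i <;> simp [ψ, hx]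
  refine ⟨ψ, ⟨fun i ↦ (h.nonempty i).mono fun a ha ↦ (mem_ψ i a).mpr (Or.inr ha), ?_, ?_, ?_⟩,
    fun i a ha ↦ ((mem_ψ i a).mp ha).imp_left And.left⟩
  · intro i
    by_cases hx : x ∈ φ i
    · rw [show ψ i = insert y (φ i) from if_pos hx]
      exact connected_induce_insert_of_contractEdge hxy hx (hy i) (h.connected i)
    · rw [show ψ i = φ i from if_neg hx]
      exact (h.connected i).mono (induce_contractEdge_le hx)
  · intro i j hij
    refine Set.disjoint_left.mpr fun a hai haj ↦ ?_
    rcases (mem_ψ i a).mp hai with ⟨rfl, hxi⟩ | hφi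
    · rcases (mem_ψ j a).mp haj with ⟨-, hxj⟩ | hφj
      exacts [Set.disjoint_left.mp (h.pairwise_disjoint hij) hxi hxj, hy j hφj]
    · rcases (mem_ψ j a).mp haj with ⟨rfl, -⟩ | hφj
      exacts [hy i hφi, Set.disjoint_left.mp (h.pairwise_disjoint hij) hφi hφj]
  · intro i j hij
    obtain ⟨a, ha, b, hb, hab⟩ := h.exists_adj hij
    rcases contractEdge_adj.mp hab with ⟨hab, -, -⟩ | ⟨-, ⟨rfl, hyb⟩ | ⟨rfl, hya⟩⟩
    · exact ⟨a, (mem_ψ i a).mpr (Or.inr ha), b, (mem_ψ j b).mpr (Or.inr hb), hab⟩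
    · exact ⟨y, (mem_ψ i y).mpr (Or.inl ⟨rfl, ha⟩), b, (mem_ψ j b).mpr (Or.inr hb), hyb⟩
    · exact ⟨a, (mem_ψ i a).mpr (Or.inr ha), y, (mem_ψ j y).mpr (Or.inl ⟨rfl, hb⟩), hya.symm⟩

end IsCliqueMinorModel

lemma mul_card_le_two_mul_ncard_edgeSet [Finite V] {d : ℕ}
    (h : ∀ v, d ≤ (G.neighborSet v).ncard) : d * Nat.card V ≤ 2 * G.edgeSet.ncard := by
  classical
  have := Fintype.ofFinite V
  calc d * Nat.card V = ∑ _v : V, d := by simp [Nat.card_eq_fintype_card, mul_comm]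
    _ ≤ ∑ v, G.degree v := Finset.sum_le_sum fun v _ ↦ by
      rw [← card_neighborSet_eq_degree, ← Nat.card_eq_fintype_card, Nat.card_coe_set_eq]
      exact h v
    _ = 2 * G.edgeFinset.card := G.sum_degrees_eq_twice_card_edges
    _ = 2 * G.edgeSet.ncard := by rw [← coe_edgeFinset, Set.ncard_coe_finset]

lemma ncard_neighborSet_induce (s : Set V) (v : s) :
    ((G.induce s).neighborSet v).ncard = (s ∩ G.neighborSet v).ncard := by
  rw [neighborSet_induce, ← Subtype.image_preimage_coe,
    Set.ncard_image_of_injective _ Subtype.val_injective]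

lemma exists_adj_of_ncard_edgeSet_pos (h : 0 < G.edgeSet.ncard) : ∃ x y, G.Adj x y := by
  obtain ⟨e, he⟩ := Set.nonempty_of_ncard_ne_zero h.ne'
  induction e using Sym2.ind with
  | _ x y => exact ⟨x, y, he⟩

/-- Branch sets are confined to `S`, the vertices in play: a contraction keeps `y` as an isolated
vertex of the same type, and only drops it from `S`. -/
def HasCliqueMinorIn (G : SimpleGraph V) (k : ℕ) (S : Set V) : Prop :=
  ∃ φ : Fin k → Set V, G.IsCliqueMinorModel φ ∧ ∀ i, φ i ⊆ S

lemma HasCliqueMinorIn.of_contractEdge {k : ℕ} {S : Set V}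
    (h : (G.contractEdge x y).HasCliqueMinorIn k (S \ {y})) (hxy : G.Adj x y) (hyS : y ∈ S) :
    G.HasCliqueMinorIn k S := by
  obtain ⟨φ, hφ, hφS⟩ := h
  obtain ⟨ψ, hψ, hψφ⟩ := hφ.of_contractEdge hxy fun i hy ↦ (hφS i hy).2 rfl
  exact ⟨ψ, hψ, fun i ↦ (hψφ i).trans (Set.insert_subset hyS ((hφS i).trans Set.sdiff_subset))⟩

lemma mul_ncard_sdiff_lt_ncard_edgeSet_contractEdge [Finite V] {c : ℕ} {S : Set V} (hyS : y ∈ S)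
    (hcommon : (G.commonNeighbors x y).ncard < c) (hE : c * S.ncard < G.edgeSet.ncard) :
    c * (S \ {y}).ncard < (G.contractEdge x y).edgeSet.ncard := by
  have hlost := G.ncard_edgeSet_le_contractEdge (x := x) (y := y)
  rw [← Set.ncard_sdiff_singleton_add_one hyS, mul_add_one] at hE
  omega

lemma hasCliqueMinorIn_succ_of_induce_neighborSet {k : ℕ} {S : Set V}
    (h : (G.induce (G.neighborSet x)).HasCliqueMinorIn k Set.univ) (hx : x ∈ S)
    (hN : G.neighborSet x ⊆ S) : G.HasCliqueMinorIn (k + 1) S := by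
  obtain ⟨φ, hφ, -⟩ := h
  have hval : ∀ i, Subtype.val '' φ i ⊆ G.neighborSet x := fun i ↦ Subtype.coe_image_subset _ _
  have hcone := hφ.image_val.optionElim (fun i hxi ↦ G.irrefl (hval i hxi))
    fun i _ ha ↦ hval i ha
  refine ⟨_, hcone.comp_injective (finSuccEquiv k).injective, fun i ↦ ?_⟩
  simp only [Function.comp_apply]
  cases finSuccEquiv k i with
  | none => exact Set.singleton_subset_iff.mpr hx
  | some j => exact (hval j).trans hN

lemma mul_card_lt_ncard_edgeSet_induce_neighborSet [Finite V] {c : ℕ} (hxy : G.Adj x y)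
    (h : ∀ w ∈ G.neighborSet x, 2 * c + 1 ≤ (G.commonNeighbors x w).ncard) :
    c * Nat.card (G.neighborSet x) < (G.induce (G.neighborSet x)).edgeSet.ncard := by
  have hdeg := mul_card_le_two_mul_ncard_edgeSet (G := G.induce (G.neighborSet x))
    (d := 2 * c + 1) fun w ↦ by
      rw [ncard_neighborSet_induce, ← commonNeighbors_eq]
      exact h w w.2
  have : Nonempty (G.neighborSet x) := ⟨⟨y, hxy⟩⟩
  have hpos : 0 < Nat.card (G.neighborSet x) := Nat.card_pos
  rw [add_mul, mul_assoc] at hdeg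
  omega

lemma hasCliqueMinorIn_succ {k : ℕ}
    (ih : ∀ {W : Type u} [Finite W] (H : SimpleGraph W),
      (2 ^ k - 1) * Nat.card W < H.edgeSet.ncard → H.HasCliqueMinorIn k Set.univ)
    [Finite V] {S : Set V} (hS : G.support ⊆ S)
    (hE : (2 ^ (k + 1) - 1) * S.ncard < G.edgeSet.ncard) : G.HasCliqueMinorIn (k + 1) S := by
  have hc : 2 ^ (k + 1) - 1 = 2 * (2 ^ k - 1) + 1 := by
    have := Nat.one_le_two_pow (n := k)
    rw [pow_succ]
    omega
  induction hn : S.ncard using Nat.strong_induction_on generalizing G S with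
  | _ n IHn =>
  by_cases hcontract : ∃ x y, G.Adj x y ∧ (G.commonNeighbors x y).ncard < 2 ^ (k + 1) - 1
  · obtain ⟨x, y, hxy, hcommon⟩ := hcontract
    have hyS : y ∈ S := hS ⟨x, hxy.symm⟩
    refine HasCliqueMinorIn.of_contractEdge ?_ hxy hyS
    exact IHn _ (hn ▸ Set.ncard_sdiff_singleton_lt_of_mem hyS)
      ((support_contractEdge_subset hxy).trans (Set.sdiff_subset_sdiff_left hS))
      (mul_ncard_sdiff_lt_ncard_edgeSet_contractEdge hyS hcommon hE) rfl
  · push Not at hcontract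
    obtain ⟨x, y, hxy⟩ := exists_adj_of_ncard_edgeSet_pos (Nat.zero_lt_of_lt hE)
    refine hasCliqueMinorIn_succ_of_induce_neighborSet (ih _ ?_) (hS ⟨y, hxy⟩)
      fun w hw ↦ hS ⟨x, hw.symm⟩
    exact mul_card_lt_ncard_edgeSet_induce_neighborSet hxy fun w hw ↦ hc ▸ hcontract x w hw

theorem hasCliqueMinorIn_of_two_pow_sub_one_mul_lt (k : ℕ) [Finite V] {S : Set V}
    (hS : G.support ⊆ S) (hE : (2 ^ k - 1) * S.ncard < G.edgeSet.ncard) :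
    G.HasCliqueMinorIn k S := by
  induction k generalizing V with
  | zero => exact ⟨Fin.elim0, ⟨fun i ↦ i.elim0, fun i ↦ i.elim0, fun i ↦ i.elim0, fun i ↦ i.elim0⟩,
      fun i ↦ i.elim0⟩
  | succ k ih =>
    exact hasCliqueMinorIn_succ (fun H hH ↦ ih (Set.subset_univ _) (by rwa [Set.ncard_univ])) hS hE

end SimpleGraph

/-- Every nontrivial minor-closed graph property is sparse: if a class of
graphs is closed under minors and excludes some graph, then there is a constant
`c` such that every `n`-vertex graph in the class has at most `c·n` edges. -/
theorem minorClosed_nontrivial_sparse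
    (P : ∀ n : ℕ, SimpleGraph (Fin n) → Prop)
    (hminor : ∀ (m n : ℕ) (H : SimpleGraph (Fin m)) (G : SimpleGraph (Fin n)),
      P n G → MinorOf H G → P m H)
    (hnontriv : ∃ (n : ℕ) (G : SimpleGraph (Fin n)), ¬ P n G) :
    ∃ c : ℕ, ∀ (n : ℕ) (G : SimpleGraph (Fin n)), P n G → G.edgeSet.ncard ≤ c * n := by
  obtain ⟨n₀, G₀, hG₀⟩ := hnontriv
  have hK : ¬ P n₀ ⊤ := fun hP ↦ hG₀ (hminor _ _ _ _ hP (SimpleGraph.minorOf_top G₀))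
  refine ⟨2 ^ n₀ - 1, fun n G hG ↦ ?_⟩
  by_contra! hE
  have hE' : (2 ^ n₀ - 1) * (Set.univ : Set (Fin n)).ncard < G.edgeSet.ncard := by simpa using hE
  obtain ⟨φ, hφ, -⟩ :=
    SimpleGraph.hasCliqueMinorIn_of_two_pow_sub_one_mul_lt n₀ (Set.subset_univ _) hE'
  exact hK (hminor _ _ _ _ hG hφ.minorOf_top)
end

section
/- Kővári–Sós–Turán bound (case s = t = 2): every graph on n vertices with no subgraph isomorphic to the 4-cycle C_4 (equivalently, K_{2,2}) has at most (1/2)(1 + √(4n−3))·n/2 edges; in particular at most n^{3/2} edges for n large enough. -/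
/-!
Two distinct vertices of a `C₄`-free graph share at most one neighbour, so the sets of
neighbour pairs of the vertices are pairwise disjoint and `∑ᵥ C(d(v), 2) ≤ C(n, 2)`.
By Cauchy–Schwarz, `S = ∑ᵥ d(v) = 2|E|` then satisfies `S² ≤ n S + n²(n - 1)`, and solving
this quadratic inequality gives `S ≤ n (1 + √(4n - 3)) / 2`.
-/

open SimpleGraph Finset

namespace SimpleGraph

variable {V : Type*} {G : SimpleGraph V}

lemma exists_injective_hom_cycleGraph_four {v w a b : V} (hvw : v ≠ w) (hab : a ≠ b)
    (hva : G.Adj v a) (hvb : G.Adj v b) (hwa : G.Adj w a) (hwb : G.Adj w b) :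
    ∃ f : cycleGraph 4 →g G, Function.Injective f := by
  have hinj : Function.Injective ![v, a, w, b] := by
    have := hva.ne; have := hvb.ne; have := hwa.ne; have := hwb.ne
    intro i j h
    fin_cases i <;> fin_cases j <;> simp_all [eq_comm]
  refine ⟨⟨![v, a, w, b], fun {i j} hij => ?_⟩, hinj⟩
  fin_cases i <;> fin_cases j <;> simp_all +decide [adj_comm]

lemma commonNeighbors_subsingleton_of_cycleGraph_four_free
    (hC4 : ¬ ∃ f : cycleGraph 4 →g G, Function.Injective f) {v w : V} (hvw : v ≠ w) :
    (G.commonNeighbors v w).Subsingleton := by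
  intro a ha b hb
  by_contra hab
  rw [mem_commonNeighbors] at ha hb
  exact hC4 (exists_injective_hom_cycleGraph_four hvw hab ha.1 hb.1 ha.2 hb.2)

variable [Fintype V] [DecidableEq V] [DecidableRel G.Adj]

lemma pairwiseDisjoint_powersetCard_two_neighborFinset
    (hG : ∀ ⦃v w⦄, v ≠ w → (G.commonNeighbors v w).Subsingleton) :
    (↑(univ : Finset V) : Set V).PairwiseDisjoint
      fun v => (G.neighborFinset v).powersetCard 2 := by
  intro v _ w _ hvw
  refine Finset.disjoint_left.mpr fun p hpv hpw => ?_
  rw [mem_powersetCard] at hpv hpw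
  obtain ⟨a, b, hab, rfl⟩ := card_eq_two.mp hpv.2
  have common : ∀ u ∈ ({a, b} : Finset V), u ∈ G.commonNeighbors v w := fun u hu =>
    G.mem_commonNeighbors.mpr ⟨(G.mem_neighborFinset _ _).mp (hpv.1 hu),
      (G.mem_neighborFinset _ _).mp (hpw.1 hu)⟩
  exact hab (hG hvw (common a (by simp)) (common b (by simp)))

lemma sum_degree_choose_two_le
    (hG : ∀ ⦃v w⦄, v ≠ w → (G.commonNeighbors v w).Subsingleton) :
    ∑ v, (G.degree v).choose 2 ≤ (Fintype.card V).choose 2 :=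
  calc ∑ v, (G.degree v).choose 2 = ∑ v, #((G.neighborFinset v).powersetCard 2) := by
        simp only [card_powersetCard, card_neighborFinset_eq_degree]
    _ = #(univ.biUnion fun v => (G.neighborFinset v).powersetCard 2) :=
        (card_biUnion (pairwiseDisjoint_powersetCard_two_neighborFinset hG)).symm
    _ ≤ #((univ : Finset V).powersetCard 2) :=
        card_le_card fun p hp => by
          obtain ⟨v, -, hpv⟩ := mem_biUnion.mp hp
          exact mem_powersetCard.mpr ⟨subset_univ p, (mem_powersetCard.mp hpv).2⟩
    _ = (Fintype.card V).choose 2 := by rw [card_powersetCard, card_univ]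

end SimpleGraph

lemma le_half_add_sqrt_of_sq_le_mul_add {x b c : ℝ} (h : x ^ 2 ≤ b * x + c) :
    x ≤ (b + √(b ^ 2 + 4 * c)) / 2 := by
  have : (2 * x - b) ^ 2 ≤ b ^ 2 + 4 * c := by nlinarith
  linarith [le_abs_self (2 * x - b), Real.abs_le_sqrt this]

lemma sum_le_of_sum_choose_two_le {ι : Type*} (s : Finset ι) (d : ι → ℕ)
    (h : ∑ i ∈ s, (d i).choose 2 ≤ (#s).choose 2) :
    (∑ i ∈ s, d i : ℝ) ≤ #s * (1 + √(4 * #s - 3)) / 2 := by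
  set n : ℝ := (#s : ℝ)
  set S : ℝ := ∑ i ∈ s, (d i : ℝ)
  have hn : 0 ≤ n := Nat.cast_nonneg _
  have hsq : ∑ i ∈ s, (d i : ℝ) ^ 2 ≤ n * (n - 1) + S := by
    have := (Nat.cast_le (α := ℝ)).mpr h
    simp only [Nat.cast_sum, Nat.cast_choose_two] at this
    have expand :
        ∑ i ∈ s, (d i : ℝ) * (d i - 1) / 2 = (∑ i ∈ s, (d i : ℝ) ^ 2 - S) / 2 := by
      rw [← sum_sub_distrib, sum_div]
      exact sum_congr rfl fun i _ => by ring
    linarith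
  have hCS : S ^ 2 ≤ n * ∑ i ∈ s, (d i : ℝ) ^ 2 := sq_sum_le_card_mul_sum_sq
  have hquad : S ^ 2 ≤ n * S + n ^ 2 * (n - 1) := by nlinarith
  have hdisc : √(n ^ 2 + 4 * (n ^ 2 * (n - 1))) = n * √(4 * n - 3) := by
    rw [show n ^ 2 + 4 * (n ^ 2 * (n - 1)) = n ^ 2 * (4 * n - 3) by ring,
      Real.sqrt_mul (sq_nonneg n), Real.sqrt_sq hn]
  calc S ≤ (n + √(n ^ 2 + 4 * (n ^ 2 * (n - 1)))) / 2 := le_half_add_sqrt_of_sq_le_mul_add hquad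
    _ = n * (1 + √(4 * n - 3)) / 2 := by rw [hdisc]; ring

lemma half_mul_one_add_sqrt_mul_half_le_rpow (n : ℕ) :
    (1 / 2) * (1 + √(4 * (n : ℝ) - 3)) * (n : ℝ) / 2 ≤ (n : ℝ) ^ ((3 : ℝ) / 2) := by
  rcases n.eq_zero_or_pos with rfl | hn
  · simp
  have hn : (1 : ℝ) ≤ n := by exact_mod_cast hn
  have hrpow : (n : ℝ) ^ ((3 : ℝ) / 2) = n * √n := by
    rw [show (3 : ℝ) / 2 = 1 + 1 / 2 by norm_num, Real.rpow_add (by linarith), Real.rpow_one,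
      Real.sqrt_eq_rpow]
  have hsqrt : √(4 * (n : ℝ) - 3) ≤ 2 * √n :=
    calc √(4 * (n : ℝ) - 3) ≤ √(2 ^ 2 * n) := Real.sqrt_le_sqrt (by linarith)
      _ = 2 * √n := by rw [Real.sqrt_mul (by norm_num), Real.sqrt_sq (by norm_num)]
  have hone : 1 ≤ √(n : ℝ) := Real.one_le_sqrt.mpr hn
  rw [hrpow]
  nlinarith

theorem kovari_sos_turan_C4_general (n : ℕ) (G : SimpleGraph (Fin n))
    (hC4 : ¬ ∃ f : SimpleGraph.cycleGraph 4 →g G, Function.Injective f) :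
    (G.edgeSet.ncard : ℝ) ≤ (1 / 2) * (1 + Real.sqrt (4 * (n : ℝ) - 3)) * (n : ℝ) / 2 ∧
      (G.edgeSet.ncard : ℝ) ≤ (n : ℝ) ^ ((3 : ℝ) / 2) := by
  classical
  have hdeg : (∑ v, G.degree v : ℝ) ≤ n * (1 + √(4 * n - 3)) / 2 := by
    have hchoose := sum_degree_choose_two_le fun _ _ =>
      commonNeighbors_subsingleton_of_cycleGraph_four_free hC4
    simpa using sum_le_of_sum_choose_two_le univ (G.degree ·) (by simpa using hchoose)
  have handshake : (∑ v, G.degree v : ℝ) = 2 * G.edgeSet.ncard := by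
    rw [← coe_edgeFinset, Set.ncard_coe_finset]
    exact_mod_cast G.sum_degrees_eq_twice_card_edges
  have hedges : (G.edgeSet.ncard : ℝ) ≤ (1 / 2) * (1 + √(4 * (n : ℝ) - 3)) * n / 2 := by
    linarith
  exact ⟨hedges, hedges.trans (half_mul_one_add_sqrt_mul_half_le_rpow n)⟩

/-- Kővári–Sós–Turán bound for `s = t = 2`: every graph on `n ≥ 1` vertices
with no subgraph isomorphic to the 4-cycle `C₄ = K_{2,2}` has at most
`(1/2)(1 + √(4n−3))·n/2` edges; in particular, at most `n^{3/2}` edges. -/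
theorem kovari_sos_turan_C4 (n : ℕ) (hn : 1 ≤ n) (G : SimpleGraph (Fin n))
    (hC4 : ¬ ∃ f : SimpleGraph.cycleGraph 4 →g G, Function.Injective f) :
    (G.edgeSet.ncard : ℝ) ≤ (1 / 2) * (1 + Real.sqrt (4 * (n : ℝ) - 3)) * (n : ℝ) / 2 ∧
      (G.edgeSet.ncard : ℝ) ≤ (n : ℝ) ^ ((3 : ℝ) / 2) :=
  kovari_sos_turan_C4_general n G hC4
end

section
/- If every component of a graph H is a path or a subdivision of the claw K_{1,3}, then for every graph G, H is a minor of G if and only if H is a subgraph of G. -/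
open SimpleGraph

/-! If a minor model of `H` in `G` contains, inside the branch sets of each component `C`, a
copy of `C`, then these copies are disjoint and together form a copy of `H`. For a path
`v₀ … vₙ` the branch sets form a chain of disjoint connected sets, consecutive ones adjacent,
and a path through the chain has length at least `n`. For a subdivided claw, pick in the centre's
branch set three vertices adjacent to the branch sets of the three arms, join them to a common
vertex by paths meeting only there, and extend each path through the branch sets of its arm.
Subdivisions of the claw are described by a labelling of their three arms, which every
elementary subdivision preserves. -/

namespace SimpleGraph

variable {V : Type*} {G : SimpleGraph V}

theorem Connected.exists_isPath_of_induce {s : Set V} (hs : (G.induce s).Connected) {a b : V}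
    (ha : a ∈ s) (hb : b ∈ s) : ∃ p : G.Walk a b, p.IsPath ∧ ∀ v ∈ p.support, v ∈ s := by
  obtain ⟨q, hq⟩ := hs.exists_isPath ⟨a, ha⟩ ⟨b, hb⟩
  let f : G.induce s →g G := (Embedding.induce s).toHom
  refine ⟨q.map f, hq.map Subtype.val_injective, ?_⟩
  change ∀ v ∈ (q.map f).support, v ∈ s
  intro v hv
  rw [Walk.support_map, List.mem_map] at hv
  obtain ⟨v, -, rfl⟩ := hv
  exact v.2

namespace Walk

variable {u v w a b x : V}

theorem IsPath.eq_of_mem_support_append {p : G.Walk u v} {q : G.Walk v w}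
    (h : (p.append q).IsPath) (hp : x ∈ p.support) (hq : x ∈ q.support) : x = v := by
  rw [isPath_def, support_append, List.nodup_append] at h
  rw [← cons_tail_support] at hq
  rcases List.mem_cons.mp hq with rfl | hq
  · rfl
  · exact absurd rfl (h.2.2 x hp x hq)

theorem IsPath.append_cons {p : G.Walk u a} {q : G.Walk b w} (hp : p.IsPath) (hq : q.IsPath)
    (hab : G.Adj a b) (hpq : ∀ x ∈ p.support, x ∉ q.support) : (p.append (cons hab q)).IsPath := by
  rw [isPath_def, support_append, support_cons, List.tail_cons, List.nodup_append]
  exact ⟨hp.support_nodup, hq.support_nodup, fun x hx _ hy hxy => hpq x hx (hxy ▸ hy)⟩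

theorem mem_support_append_cons {p : G.Walk u a} {q : G.Walk b w} {hab : G.Adj a b} :
    x ∈ (p.append (cons hab q)).support ↔ x ∈ p.support ∨ x ∈ q.support := by
  rw [mem_support_append_iff, support_cons, List.mem_cons]
  constructor
  · rintro (h | rfl | h)
    exacts [.inl h, .inl p.end_mem_support, .inr h]
  · rintro (h | h)
    exacts [.inl h, .inr (.inr h)]

end Walk

theorem exists_isPath_of_chain (D : ℕ → Set V) (m : ℕ)
    (hconn : ∀ j ≤ m, (G.induce (D j)).Connected)
    (hdisj : ∀ j ≤ m, ∀ j' ≤ m, j ≠ j' → Disjoint (D j) (D j'))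
    (hadj : ∀ j < m, ∃ a ∈ D j, ∃ b ∈ D (j + 1), G.Adj a b) {x : V} (hx : x ∈ D 0) :
    ∃ y, ∃ p : G.Walk x y, p.IsPath ∧ m ≤ p.length ∧ ∀ v ∈ p.support, ∃ j ≤ m, v ∈ D j := by
  induction m generalizing D x with
  | zero => exact ⟨x, .nil, .nil, le_rfl, by simpa using hx⟩
  | succ m ih =>
    obtain ⟨a, ha, b, hb, hab⟩ := hadj 0 m.succ_pos
    obtain ⟨p, hp, hpD⟩ := (hconn 0 m.succ.zero_le).exists_isPath_of_induce hx ha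
    obtain ⟨y, q, hq, hlen, hqD⟩ := ih (fun j => D (j + 1)) (fun j hj => hconn _ (by omega))
      (fun j hj j' hj' h => hdisj _ (by omega) _ (by omega) (by omega))
      (fun j hj => hadj _ (by omega)) hb
    refine ⟨y, p.append (.cons hab q), hp.append_cons hq hab fun v hv hvq => ?_, ?_, fun v hv => ?_⟩
    · obtain ⟨j, hj, hvj⟩ := hqD v hvq
      exact Set.disjoint_left.mp (hdisj 0 (by omega) (j + 1) (by omega) (by omega)) (hpD v hv) hvj
    · simp only [Walk.length_append, Walk.length_cons]
      omega
    · rcases Walk.mem_support_append_cons.mp hv with hv | hv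
      · exact ⟨0, by omega, hpD v hv⟩
      · obtain ⟨j, hj, hvj⟩ := hqD v hv
        exact ⟨j + 1, by omega, hvj⟩

theorem Connected.exists_tripod_of_induce {B : Set V} (hB : (G.induce B).Connected) (a : Fin 3 → V)
    (ha : ∀ i, a i ∈ B) :
    ∃ x, ∃ P : ∀ i, G.Walk x (a i), (∀ i, (P i).IsPath ∧ ∀ v ∈ (P i).support, v ∈ B) ∧
      ∀ i i', i ≠ i' → ∀ v ∈ (P i).support, v ∈ (P i').support → v = x := by
  classical
  obtain ⟨p, hp, hpB⟩ := hB.exists_isPath_of_induce (ha 0) (ha 1)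
  obtain ⟨q, hq, hqB⟩ := hB.exists_isPath_of_induce (ha 2) (ha 0)
  -- `x` is the first vertex of `q` on `p`
  obtain ⟨x, hxp, hxq, hfirst⟩ := q.exists_mem_support_forall_mem_support_imp_eq
    p.support.toFinset ⟨a 0, by simp⟩
  rw [List.mem_toFinset] at hxp
  set t := p.takeUntil x hxp
  set d := p.dropUntil x hxp
  set r := q.takeUntil x hxq
  have htd : ∀ v ∈ t.support, v ∈ d.support → v = x := fun v =>
    ((p.take_spec hxp).symm ▸ hp).eq_of_mem_support_append
  have hrp : ∀ v ∈ r.support, v ∈ p.support → v = x := fun v hr hp' =>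
    hfirst v (List.mem_toFinset.mpr hp') hr
  have ht : ∀ v ∈ t.support, v ∈ p.support := fun _ h => p.support_takeUntil_subset_support hxp h
  have hd : ∀ v ∈ d.support, v ∈ p.support := fun _ h => p.support_dropUntil_subset_support hxp h
  have hr : ∀ v ∈ r.support, v ∈ q.support := fun _ h => q.support_takeUntil_subset_support hxq h
  let P : ∀ i, G.Walk x (a i) := fun i => match i with
    | 0 => t.reverse
    | 1 => d
    | 2 => r.reverse
  refine ⟨x, P, fun i => ?_, fun i i' hii' v hv hv' => ?_⟩
  · fin_cases i
    · exact ⟨(hp.takeUntil hxp).reverse, by simpa [P] using fun v hv => hpB v (ht v hv)⟩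
    · exact ⟨hp.dropUntil hxp, fun v hv => hpB v (hd v hv)⟩
    · exact ⟨(hq.takeUntil hxq).reverse, by simpa [P] using fun v hv => hqB v (hr v hv)⟩
  · fin_cases i <;> fin_cases i' <;> simp only [P, Walk.support_reverse, List.mem_reverse] at hv hv'
    all_goals first
      | exact absurd rfl hii'
      | exact htd v hv hv' | exact htd v hv' hv
      | exact hrp v hv' (ht v hv) | exact hrp v hv (ht v hv')
      | exact hrp v hv' (hd v hv) | exact hrp v hv (hd v hv')

end SimpleGraph

section Minors

variable {V W X : Type*} {H : SimpleGraph V} {K : SimpleGraph X} {G : SimpleGraph W}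

structure MinorModel (H : SimpleGraph V) (G : SimpleGraph W) where
  branch : V → Set W
  connected : ∀ v, (G.induce (branch v)).Connected
  disjoint : ∀ u v, u ≠ v → Disjoint (branch u) (branch v)
  exists_adj : ∀ u v, H.Adj u v → ∃ a ∈ branch u, ∃ b ∈ branch v, G.Adj a b

namespace MinorModel

def comap (M : MinorModel H G) (ι : K ↪g H) : MinorModel K G where
  branch := M.branch ∘ ι
  connected v := M.connected (ι v)
  disjoint _ _ h := M.disjoint _ _ (ι.injective.ne h)
  exists_adj _ _ h := M.exists_adj _ _ (ι.map_adj_iff.mpr h)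

def HasCopyInBranchSets (M : MinorModel H G) : Prop :=
  ∃ f : H →g G, Function.Injective f ∧ ∀ v, ∃ u, f v ∈ M.branch u

theorem hasCopyInBranchSets_of_iso (e : H ≃g K)
    (hK : ∀ M : MinorModel K G, M.HasCopyInBranchSets) (M : MinorModel H G) :
    M.HasCopyInBranchSets := by
  obtain ⟨f, hf, hbranch⟩ := hK (M.comap e.symm.toEmbedding)
  refine ⟨f.comp e.toHom, hf.comp e.injective, fun v => ?_⟩
  obtain ⟨u, hu⟩ := hbranch (e v)
  exact ⟨e.symm u, hu⟩

theorem hasCopyInBranchSets_pathGraph {n : ℕ} (M : MinorModel (pathGraph (n + 1)) G) :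
    M.HasCopyInBranchSets := by
  have hval : ∀ j ≤ n, (Fin.ofNat (n + 1) j : ℕ) = j := fun j hj => by
    rw [Fin.val_ofNat, Nat.mod_eq_of_lt (by omega)]
  obtain ⟨⟨x, hx⟩⟩ := (M.connected 0).nonempty
  obtain ⟨y, p, hp, hlen, hpD⟩ :=
    exists_isPath_of_chain (fun j => M.branch (Fin.ofNat (n + 1) j)) n (fun j _ => M.connected _)
      (fun j hj j' hj' hne => M.disjoint _ _ fun h => hne (by rw [← hval j hj, h, hval j' hj']))
      (fun j hj => M.exists_adj _ _ <| by
        rw [pathGraph_adj, hval j (by omega), hval (j + 1) hj]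
        exact .inl rfl)
      (by simpa using hx)
  refine ⟨⟨fun k => p.getVert k, fun {k k'} h => ?_⟩, fun k k' h => ?_, fun k => ?_⟩
  · rcases pathGraph_adj.mp h with h | h
    · exact h ▸ p.adj_getVert_succ (by omega)
    · exact (h ▸ p.adj_getVert_succ (by omega)).symm
  · exact Fin.ext (hp.getVert_injOn (k.is_le.trans hlen) (k'.is_le.trans hlen) h)
  · obtain ⟨j, -, hj⟩ := hpD _ (p.getVert_mem_support k)
    exact ⟨_, hj⟩

theorem subgraphOf_of_forall_connectedComponent (M : MinorModel H G)
    (h : ∀ c : H.ConnectedComponent, (M.comap (Embedding.induce c.supp)).HasCopyInBranchSets) :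
    SubgraphOf H G := by
  choose f hf hbranch using h
  let F : V → W := fun a => f (H.connectedComponentMk a) ⟨a, rfl⟩
  have hF : ∀ c a (ha : a ∈ c.supp), F a = f c ⟨a, ha⟩ := by
    rintro c a rfl
    rfl
  refine ⟨⟨F, fun {a b} hab => ?_⟩, fun a b hab => ?_⟩
  · have hb : b ∈ (H.connectedComponentMk a).supp :=
      (ConnectedComponent.connectedComponentMk_eq_of_adj hab).symm
    rw [hF _ b hb]
    exact (f _).map_adj
      (show (H.induce (H.connectedComponentMk a).supp).Adj ⟨a, rfl⟩ ⟨b, hb⟩ from hab)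
  · by_cases hc : b ∈ (H.connectedComponentMk a).supp
    · exact congrArg Subtype.val (hf _ (hab.trans (hF _ b hc)))
    · obtain ⟨u, hu⟩ := hbranch _ ⟨a, rfl⟩
      obtain ⟨u', hu'⟩ := hbranch _ ⟨b, rfl⟩
      have hne : (u : V) ≠ u' := fun h => hc <| by
        rw [ConnectedComponent.mem_supp_iff, ← u'.2, ← h]
        exact u.2
      exact absurd (hab ▸ hu') (Set.disjoint_left.mp (M.disjoint _ _ hne) hu)

end MinorModel

theorem SubgraphOf.minorOf (h : SubgraphOf H G) : MinorOf H G := by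
  obtain ⟨f, hf⟩ := h
  exact ⟨fun v => {f v}, fun v => Set.singleton_nonempty _, fun v => .of_subsingleton,
    fun u v huv => Set.disjoint_singleton.mpr (hf.ne huv),
    fun u v huv => ⟨f u, rfl, f v, rfl, f.map_adj huv⟩⟩

end Minors

section Spider

variable {V : Type*}

/-- Arm `i` of a spider with leg lengths `ℓ` is labelled `A i 0, …, A i (ℓ i)`; `A i 0` is the
common centre, and labels are otherwise distinct. -/
structure IsSpiderLabelling (ℓ : Fin 3 → ℕ) (A : Fin 3 → ℕ → V) : Prop where
  center : ∀ i i', A i 0 = A i' 0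
  eq_of_eq : ∀ ⦃i j i' j'⦄, j ≤ ℓ i → j' ≤ ℓ i' → A i j = A i' j' →
    i = i' ∧ j = j' ∨ j = 0 ∧ j' = 0

def spiderEdges (ℓ : Fin 3 → ℕ) (A : Fin 3 → ℕ → V) : Set (Sym2 V) :=
  {e | ∃ i, ∃ j < ℓ i, s(A i j, A i (j + 1)) = e}

structure IsSpider (K : SimpleGraph V) (ℓ : Fin 3 → ℕ) (A : Fin 3 → ℕ → V) : Prop
    extends IsSpiderLabelling ℓ A where
  pos : ∀ i, 0 < ℓ i
  edgeSet_eq : K.edgeSet = spiderEdges ℓ A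

namespace IsSpiderLabelling

variable {ℓ : Fin 3 → ℕ} {A : Fin 3 → ℕ → V}

theorem ne_succ (hA : IsSpiderLabelling ℓ A) {i : Fin 3} {j : ℕ} (hj : j < ℓ i) :
    A i j ≠ A i (j + 1) := fun h => by
  rcases hA.eq_of_eq hj.le hj h with ⟨-, h⟩ | ⟨-, h⟩ <;> omega

theorem not_isDiag_of_mem_spiderEdges (hA : IsSpiderLabelling ℓ A) {e : Sym2 V}
    (he : e ∈ spiderEdges ℓ A) : ¬e.IsDiag := by
  obtain ⟨i, j, hj, rfl⟩ := he
  exact Sym2.mk_isDiag_iff.not.mpr (hA.ne_succ hj)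

theorem eq_of_edge_eq (hA : IsSpiderLabelling ℓ A) {i i' : Fin 3} {j j' : ℕ} (hj : j < ℓ i)
    (hj' : j' < ℓ i') (h : s(A i j, A i (j + 1)) = s(A i' j', A i' (j' + 1))) :
    i = i' ∧ j = j' := by
  rcases Sym2.eq_iff.mp h with ⟨-, h⟩ | ⟨h₁, h₂⟩
  · rcases hA.eq_of_eq hj hj' h with ⟨rfl, h⟩ | ⟨h, -⟩ <;> omega
  · rcases hA.eq_of_eq hj.le hj' h₁ with ⟨rfl, h₁⟩ | ⟨-, h₁⟩
    · rcases hA.eq_of_eq hj hj'.le h₂ with ⟨-, h₂⟩ | ⟨h₂, -⟩ <;> omega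
    · omega

end IsSpiderLabelling

namespace IsSpider

variable {K : SimpleGraph V} {ℓ : Fin 3 → ℕ} {A : Fin 3 → ℕ → V}

theorem adj (hK : IsSpider K ℓ A) {i : Fin 3} {j : ℕ} (hj : j < ℓ i) :
    K.Adj (A i j) (A i (j + 1)) := by
  rw [← SimpleGraph.mem_edgeSet, hK.edgeSet_eq]
  exact ⟨i, j, hj, rfl⟩

theorem mem_support (hK : IsSpider K ℓ A) {i : Fin 3} {j : ℕ} (hj : j ≤ ℓ i) :
    A i j ∈ K.support := by
  rw [SimpleGraph.mem_support]
  rcases hj.lt_or_eq with hj | rfl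
  · exact ⟨_, hK.adj hj⟩
  · obtain ⟨j, hj⟩ := Nat.exists_eq_add_one_of_ne_zero (hK.pos i).ne'
    rw [hj]
    exact ⟨_, (hK.adj (hj ▸ j.lt_add_one)).symm⟩

theorem exists_eq_of_mem_support (hK : IsSpider K ℓ A) {v : V} (hv : v ∈ K.support) :
    ∃ i, ∃ j ≤ ℓ i, A i j = v := by
  rw [SimpleGraph.mem_support] at hv
  obtain ⟨u, hu⟩ := hv
  rw [← SimpleGraph.mem_edgeSet, hK.edgeSet_eq] at hu
  obtain ⟨i, j, hj, h⟩ := hu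
  rcases Sym2.eq_iff.mp h with ⟨h, -⟩ | ⟨-, h⟩
  exacts [⟨i, j, hj.le, h⟩, ⟨i, j + 1, hj, h⟩]

theorem induce_support (hK : IsSpider K ℓ A) :
    ∃ A' : Fin 3 → ℕ → K.support, IsSpider (K.induce K.support) ℓ A' ∧
      ∀ v, ∃ i, ∃ j ≤ ℓ i, A' i j = v := by
  -- clamped at `ℓ i`, so that every label lies in the support
  let A' : Fin 3 → ℕ → K.support := fun i j =>
    ⟨A i (min j (ℓ i)), hK.mem_support (min_le_right _ _)⟩
  have hA' : ∀ {i j}, j ≤ ℓ i → (A' i j : V) = A i j := fun hj => by simp [A', min_eq_left hj]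
  refine ⟨A', ⟨⟨fun i i' => Subtype.ext ?_, fun i j i' j' hj hj' h => ?_⟩, hK.pos, ?_⟩, fun v => ?_⟩
  · simpa [A'] using hK.center i i'
  · exact hK.eq_of_eq hj hj' (by rw [← hA' hj, ← hA' hj', h])
  · ext e
    induction e using Sym2.ind with | _ x y => ?_
    rw [SimpleGraph.mem_edgeSet, SimpleGraph.induce_adj, ← SimpleGraph.mem_edgeSet, hK.edgeSet_eq]
    refine exists_congr fun i => exists_congr fun j => and_congr_right fun hj => ?_
    rw [← (Sym2.map.injective Subtype.val_injective).eq_iff, Sym2.map_mk, Sym2.map_mk, hA' hj.le,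
      hA' hj]
  · obtain ⟨i, j, hj, h⟩ := hK.exists_eq_of_mem_support v.2
    exact ⟨i, j, hj, Subtype.ext (by rw [hA' hj, h])⟩

end IsSpider

end Spider

section Subdivision

variable {V : Type*}

/-- Position on arm `i` before a vertex was inserted between positions `j₀` and `j₀ + 1` of
arm `i₀`. -/
def oldIndex (i₀ : Fin 3) (j₀ : ℕ) (i : Fin 3) (j : ℕ) : ℕ :=
  if i = i₀ ∧ j₀ + 1 < j then j - 1 else j

def insertLabel (A : Fin 3 → ℕ → V) (i₀ : Fin 3) (j₀ : ℕ) (w : V) : Fin 3 → ℕ → V :=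
  fun i j => if i = i₀ ∧ j = j₀ + 1 then w else A i (oldIndex i₀ j₀ i j)

variable {A : Fin 3 → ℕ → V} {ℓ : Fin 3 → ℕ} {i₀ i i' : Fin 3} {j₀ j j' : ℕ} {w : V}

theorem oldIndex_eq_zero (h : oldIndex i₀ j₀ i j = 0) : j = 0 := by
  unfold oldIndex at h
  split_ifs at h <;> omega

theorem oldIndex_le (hj₀ : j₀ < ℓ i₀) (hj : j ≤ Function.update ℓ i₀ (ℓ i₀ + 1) i)
    (hnew : ¬(i = i₀ ∧ j = j₀ + 1)) :
    oldIndex i₀ j₀ i j ≤ ℓ i := by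
  unfold oldIndex
  rcases eq_or_ne i i₀ with rfl | hi
  · simp only [Function.update_self, true_and] at hj hnew ⊢
    split_ifs <;> omega
  · simpa [hi] using hj

theorem oldIndex_injective (hnew : ¬(i = i₀ ∧ j = j₀ + 1)) (hnew' : ¬(i = i₀ ∧ j' = j₀ + 1))
    (h : oldIndex i₀ j₀ i j = oldIndex i₀ j₀ i j') : j = j' := by
  unfold oldIndex at h
  rcases eq_or_ne i i₀ with rfl | hi
  · simp only [true_and] at hnew hnew' h
    split_ifs at h <;> omega
  · simpa [hi] using h

theorem insertLabel_of_ne (h : i ≠ i₀) : insertLabel A i₀ j₀ w i j = A i j := by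
  simp [insertLabel, oldIndex, h]

theorem insertLabel_of_le (h : j ≤ j₀) : insertLabel A i₀ j₀ w i j = A i j := by
  simp [insertLabel, oldIndex, show j ≠ j₀ + 1 by omega, show ¬j₀ + 1 < j by omega]

theorem insertLabel_self : insertLabel A i₀ j₀ w i₀ (j₀ + 1) = w := by
  simp [insertLabel]

theorem insertLabel_succ_of_lt (h : j₀ < j) : insertLabel A i₀ j₀ w i₀ (j + 1) = A i₀ j := by
  simp [insertLabel, oldIndex, show j ≠ j₀ by omega, show j₀ < j by omega]

theorem IsSpiderLabelling.insertLabel (hA : IsSpiderLabelling ℓ A) (hj₀ : j₀ < ℓ i₀)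
    (hw : ∀ i, ∀ j ≤ ℓ i, A i j ≠ w) :
    IsSpiderLabelling (Function.update ℓ i₀ (ℓ i₀ + 1)) (insertLabel A i₀ j₀ w) := by
  have h0 : ∀ i, _root_.insertLabel A i₀ j₀ w i 0 = A i 0 := fun i => insertLabel_of_le j₀.zero_le
  refine ⟨fun i i' => by rw [h0, h0, hA.center i i'], fun i j i' j' hj hj' h => ?_⟩
  by_cases hnew : i = i₀ ∧ j = j₀ + 1 <;> by_cases hnew' : i' = i₀ ∧ j' = j₀ + 1
  · exact .inl ⟨hnew.1.trans hnew'.1.symm, hnew.2.trans hnew'.2.symm⟩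
  · simp only [_root_.insertLabel, if_pos hnew, if_neg hnew'] at h
    exact absurd h.symm (hw _ _ (oldIndex_le hj₀ hj' hnew'))
  · simp only [_root_.insertLabel, if_neg hnew, if_pos hnew'] at h
    exact absurd h (hw _ _ (oldIndex_le hj₀ hj hnew))
  · simp only [_root_.insertLabel, if_neg hnew, if_neg hnew'] at h
    rcases hA.eq_of_eq (oldIndex_le hj₀ hj hnew) (oldIndex_le hj₀ hj' hnew') h with
      ⟨rfl, h⟩ | ⟨h, h'⟩
    · exact .inl ⟨rfl, oldIndex_injective hnew hnew' h⟩
    · exact .inr ⟨oldIndex_eq_zero h, oldIndex_eq_zero h'⟩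

theorem spiderEdges_insertLabel (hA : IsSpiderLabelling ℓ A) (hj₀ : j₀ < ℓ i₀) :
    spiderEdges (Function.update ℓ i₀ (ℓ i₀ + 1)) (insertLabel A i₀ j₀ w) =
      (spiderEdges ℓ A \ {s(A i₀ j₀, A i₀ (j₀ + 1))}) ∪ {s(A i₀ j₀, w), s(w, A i₀ (j₀ + 1))} := by
  ext e
  constructor
  · rintro ⟨i, j, hj, rfl⟩
    rcases eq_or_ne i i₀ with rfl | hi
    · rw [Function.update_self] at hj
      rcases lt_trichotomy j j₀ with hlt | rfl | hgt
      · rw [insertLabel_of_le hlt.le, insertLabel_of_le hlt]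
        exact .inl ⟨⟨i, j, by omega, rfl⟩, fun h => by
          have := (hA.eq_of_edge_eq (by omega) hj₀ h).2; omega⟩
      · rw [insertLabel_of_le le_rfl, insertLabel_self]
        exact .inr (.inl rfl)
      · obtain ⟨j, rfl⟩ : ∃ k, j = k + 1 := ⟨j - 1, by omega⟩
        rcases (Nat.le_of_lt_succ hgt).eq_or_lt with rfl | hgt
        · rw [insertLabel_self, insertLabel_succ_of_lt (lt_add_one _)]
          exact .inr (.inr rfl)
        · rw [insertLabel_succ_of_lt hgt, insertLabel_succ_of_lt (by omega)]
          exact .inl ⟨⟨i, j, by omega, rfl⟩, fun h => by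
            have := (hA.eq_of_edge_eq (by omega) hj₀ h).2; omega⟩
    · rw [Function.update_of_ne hi] at hj
      rw [insertLabel_of_ne hi, insertLabel_of_ne hi]
      exact .inl ⟨⟨i, j, hj, rfl⟩, fun h => hi (hA.eq_of_edge_eq hj hj₀ h).1⟩
  · rintro (⟨⟨i, j, hj, rfl⟩, hne⟩ | rfl | rfl)
    · have hij : ¬(i = i₀ ∧ j = j₀) := fun ⟨h₁, h₂⟩ => hne (by rw [h₁, h₂]; rfl)
      rcases eq_or_ne i i₀ with rfl | hi
      · rcases lt_or_gt_of_ne fun h => hij ⟨rfl, h⟩ with hlt | hgt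
        · exact ⟨i, j, by rw [Function.update_self]; omega,
            by rw [insertLabel_of_le hlt.le, insertLabel_of_le hlt]⟩
        · exact ⟨i, j + 1, by rw [Function.update_self]; omega,
            by rw [insertLabel_succ_of_lt hgt, insertLabel_succ_of_lt (by omega)]⟩
      · exact ⟨i, j, by simpa [hi] using hj, by rw [insertLabel_of_ne hi, insertLabel_of_ne hi]⟩
    · exact ⟨i₀, j₀, by rw [Function.update_self]; omega,
        by rw [insertLabel_of_le le_rfl, insertLabel_self]⟩
    · exact ⟨i₀, j₀ + 1, by rw [Function.update_self]; omega,
        by rw [insertLabel_self, insertLabel_succ_of_lt (lt_add_one _)]⟩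

theorem IsSpider.subdivide {K : SimpleGraph V} (hK : IsSpider K ℓ A) (hj₀ : j₀ < ℓ i₀)
    (hw : ∀ i, ∀ j ≤ ℓ i, A i j ≠ w) :
    IsSpider (fromEdgeSet ((K.edgeSet \ {s(A i₀ j₀, A i₀ (j₀ + 1))}) ∪
      {s(A i₀ j₀, w), s(w, A i₀ (j₀ + 1))})) (Function.update ℓ i₀ (ℓ i₀ + 1))
      (insertLabel A i₀ j₀ w) where
  toIsSpiderLabelling := hK.insertLabel hj₀ hw
  pos i := by
    rcases eq_or_ne i i₀ with rfl | hi
    · simp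
    · simpa [hi] using hK.pos i
  edgeSet_eq := by
    rw [edgeSet_fromEdgeSet, hK.edgeSet_eq, ← spiderEdges_insertLabel hK.toIsSpiderLabelling hj₀]
    exact sdiff_eq_left.mpr <| Set.disjoint_left.mpr fun e he =>
      (hK.insertLabel hj₀ hw).not_isDiag_of_mem_spiderEdges he

theorem IsSpider.of_elemSubdiv {K K' : SimpleGraph ℕ} {A : Fin 3 → ℕ → ℕ} (hK : IsSpider K ℓ A)
    (h : ElemSubdiv K K') : ∃ ℓ' A', IsSpider K' ℓ' A' := by
  obtain ⟨u, v, w, huv, hw, -, -, rfl⟩ := h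
  rw [← mem_edgeSet, hK.edgeSet_eq] at huv
  obtain ⟨i₀, j₀, hj₀, he⟩ := huv
  have hw' : ∀ i, ∀ j ≤ ℓ i, A i j ≠ w := fun i j hj h => by
    obtain ⟨x, hx⟩ := (h ▸ hK.mem_support hj)
    exact (Set.eq_empty_iff_forall_notMem.mp hw) x hx
  have hpair : ({s(u, w), s(w, v)} : Set (Sym2 ℕ)) = {s(A i₀ j₀, w), s(w, A i₀ (j₀ + 1))} := by
    rcases Sym2.eq_iff.mp he with ⟨rfl, rfl⟩ | ⟨rfl, rfl⟩
    · rfl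
    · rw [Set.pair_comm, Sym2.eq_swap, Sym2.eq_swap (a := w)]
  rw [← he, hpair]
  exact ⟨_, _, hK.subdivide hj₀ hw'⟩

theorem isSpider_starN :
    IsSpider (starN 3) (fun _ => 1) (fun i j => if j = 0 then 0 else i + 1) where
  center _ _ := rfl
  eq_of_eq i j i' j' hj hj' h := by
    interval_cases j <;> interval_cases j' <;> simp_all [Fin.val_inj]
  pos _ := one_pos
  edgeSet_eq := by
    ext e
    induction e using Sym2.ind with | _ x y => ?_
    simp only [mem_edgeSet, starN, fromEdgeSet_adj, spiderEdges, Set.mem_ofPred_eq]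
    constructor
    · rintro ⟨⟨k, hk₁, hk₃, he⟩, -⟩
      have hk : k - 1 + 1 = k := by omega
      exact ⟨⟨k - 1, by omega⟩, 0, one_pos, by simp [he, hk]⟩
    · rintro ⟨i, j, hj, he⟩
      obtain rfl : j = 0 := by omega
      simp only [Nat.zero_add, if_true, one_ne_zero, if_false] at he
      refine ⟨⟨i + 1, by omega, by omega, he.symm⟩, fun hxy => ?_⟩
      rw [hxy, Sym2.eq_iff] at he
      omega

theorem IsSubdivision.exists_isSpider {K : SimpleGraph ℕ} (h : IsSubdivision (starN 3) K) :
    ∃ ℓ A, IsSpider K ℓ A := by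
  induction h with
  | refl => exact ⟨_, _, isSpider_starN⟩
  | tail _ hstep ih =>
    obtain ⟨ℓ, A, hK⟩ := ih
    exact hK.of_elemSubdiv hstep

end Subdivision

section SpiderCopy

variable {V W : Type*} {K : SimpleGraph V} {G : SimpleGraph W} {ℓ : Fin 3 → ℕ}
  {A : Fin 3 → ℕ → V}

theorem IsSpider.exists_injective_hom {f : Fin 3 → ℕ → W} (hK : IsSpider K ℓ A)
    (hsurj : ∀ v, ∃ i, ∃ j ≤ ℓ i, A i j = v) (hf : IsSpiderLabelling ℓ f)
    (hfG : spiderEdges ℓ f ⊆ G.edgeSet) :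
    ∃ g : K →g G, Function.Injective g ∧ ∀ i, ∀ j ≤ ℓ i, g (A i j) = f i j := by
  choose i j hj hA using hsurj
  have hg : ∀ i' j', j' ≤ ℓ i' → f (i (A i' j')) (j (A i' j')) = f i' j' := fun i' j' hj' => by
    rcases hK.eq_of_eq (hj _) hj' (hA _) with ⟨h₁, h₂⟩ | ⟨h₁, h₂⟩
    · rw [h₁, h₂]
    · rw [h₁, h₂, hf.center]
  have hfadj : ∀ i' j', j' < ℓ i' → G.Adj (f i' j') (f i' (j' + 1)) := fun i' j' hj' =>
    hfG ⟨i', j', hj', rfl⟩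
  refine ⟨⟨fun v => f (i v) (j v), fun {u v} huv => ?_⟩, fun u v huv => ?_, hg⟩
  · rw [← mem_edgeSet, hK.edgeSet_eq] at huv
    obtain ⟨i', j', hj', he⟩ := huv
    rcases Sym2.eq_iff.mp he with ⟨rfl, rfl⟩ | ⟨rfl, rfl⟩
    · simpa only [hg _ _ hj'.le, hg _ _ hj'] using hfadj i' j' hj'
    · simpa only [hg _ _ hj'.le, hg _ _ hj'] using (hfadj i' j' hj').symm
  · rcases hf.eq_of_eq (hj u) (hj v) huv with ⟨h₁, h₂⟩ | ⟨h₁, h₂⟩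
    · rw [← hA u, ← hA v, h₁, h₂]
    · rw [← hA u, ← hA v, h₁, h₂, hK.center]

theorem MinorModel.exists_spider_of_isSpider (hK : IsSpider K ℓ A) (M : MinorModel K G) :
    ∃ f : Fin 3 → ℕ → W, IsSpiderLabelling ℓ f ∧ spiderEdges ℓ f ⊆ G.edgeSet ∧
      ∀ i, ∀ j ≤ ℓ i, ∃ v, f i j ∈ M.branch v := by
  set B := M.branch (A 0 0)
  set C : Fin 3 → ℕ → Set W := fun i j => M.branch (A i (j + 1))
  have hBC : ∀ i, ∀ j < ℓ i, Disjoint B (C i j) := fun i j hj => M.disjoint _ _ fun h => by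
    rcases hK.eq_of_eq (Nat.zero_le _) hj h with ⟨-, h⟩ | ⟨-, h⟩ <;> omega
  have hCC : ∀ i i', ∀ j < ℓ i, ∀ j' < ℓ i', ¬(i = i' ∧ j = j') → Disjoint (C i j) (C i' j') :=
    fun i i' j hj j' hj' hne => M.disjoint _ _ fun h => by
      rcases hK.eq_of_eq hj hj' h with ⟨h₁, h₂⟩ | ⟨h, -⟩
      · exact hne ⟨h₁, by omega⟩
      · omega
  have hedge : ∀ i, ∃ a ∈ B, ∃ b ∈ C i 0, G.Adj a b := fun i => by
    simpa [B, C, hK.center i 0] using M.exists_adj _ _ (hK.adj (hK.pos i))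
  choose a ha b hb hab using hedge
  obtain ⟨x, P, hP, hPP⟩ := (M.connected _).exists_tripod_of_induce a ha
  have harm : ∀ i, ∃ y, ∃ R : G.Walk x y, R.IsPath ∧ ℓ i ≤ R.length ∧
      ∀ v ∈ R.support, v ∈ (P i).support ∨ ∃ j < ℓ i, v ∈ C i j := by
    intro i
    have hpos := hK.pos i
    obtain ⟨y, Q, hQ, hlen, hQC⟩ := exists_isPath_of_chain (C i) (ℓ i - 1)
      (fun j _ => M.connected _)
      (fun j hj j' hj' hne => hCC i i j (by omega) j' (by omega) fun h => hne h.2)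
      (fun j hj => M.exists_adj _ _ (hK.adj (by omega))) (hb i)
    refine ⟨y, (P i).append (.cons (hab i) Q), (hP i).1.append_cons hQ (hab i) fun v hv hvQ => ?_,
      ?_, fun v hv => ?_⟩
    · obtain ⟨j, hj, hvj⟩ := hQC v hvQ
      exact Set.disjoint_left.mp (hBC i j (by omega)) ((hP i).2 v hv) hvj
    · simp only [Walk.length_append, Walk.length_cons]
      omega
    · rcases Walk.mem_support_append_cons.mp hv with hv | hv
      · exact .inl hv
      · obtain ⟨j, hj, hvj⟩ := hQC v hv
        exact .inr ⟨j, by omega, hvj⟩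
  choose y arm hpath hlen hsupp using harm
  have hmeet : ∀ i i', i ≠ i' → ∀ v ∈ (arm i).support, v ∈ (arm i').support → v = x := by
    intro i i' hii' v hv hv'
    rcases hsupp i v hv with hv | ⟨j, hj, hvj⟩ <;>
      rcases hsupp i' v hv' with hv' | ⟨j', hj', hvj'⟩
    · exact hPP i i' hii' v hv hv'
    · exact absurd hvj' (Set.disjoint_left.mp (hBC i' j' hj') ((hP i).2 v hv))
    · exact absurd hvj (Set.disjoint_left.mp (hBC i j hj) ((hP i').2 v hv'))
    · exact absurd hvj' (Set.disjoint_left.mp (hCC i i' j hj j' hj' fun h => hii' h.1) hvj)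
  refine ⟨fun i j => (arm i).getVert j, ⟨fun i i' => by simp, fun i j i' j' hj hj' h => ?_⟩,
    ?_, fun i j hj => ?_⟩
  · by_cases hii' : i = i'
    · subst hii'
      exact .inl ⟨rfl, (hpath i).getVert_injOn (hj.trans (hlen i)) (hj'.trans (hlen i)) h⟩
    · have hx := hmeet i i' hii' _ ((arm i).getVert_mem_support j)
        (h ▸ (arm i').getVert_mem_support j')
      exact .inr ⟨((hpath i).getVert_eq_start_iff (hj.trans (hlen i))).mp hx,
        ((hpath i').getVert_eq_start_iff (hj'.trans (hlen i'))).mp (h ▸ hx)⟩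
  · rintro _ ⟨i, j, hj, rfl⟩
    exact (arm i).adj_getVert_succ (hj.trans_le (hlen i))
  · rcases hsupp i _ ((arm i).getVert_mem_support j) with hv | ⟨j', -, hv⟩
    · exact ⟨_, (hP i).2 _ hv⟩
    · exact ⟨_, hv⟩

theorem MinorModel.hasCopyInBranchSets_of_isSpider (hK : IsSpider K ℓ A)
    (hsurj : ∀ v, ∃ i, ∃ j ≤ ℓ i, A i j = v) (M : MinorModel K G) : M.HasCopyInBranchSets := by
  obtain ⟨f, hf, hfG, hbranch⟩ := M.exists_spider_of_isSpider hK
  obtain ⟨g, hg, hgf⟩ := hK.exists_injective_hom hsurj hf hfG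
  refine ⟨g, hg, fun v => ?_⟩
  obtain ⟨i, j, hj, rfl⟩ := hsurj v
  rw [hgf i j hj]
  exact hbranch i j hj

end SpiderCopy

/-- If every connected component of `H` is a path or a subdivision of the claw
`K_{1,3}`, then for every graph `G`, `H` is a minor of `G` if and only if `H`
is a subgraph of `G`. -/
theorem minor_iff_subgraph_of_paths_and_claws (H : SimpleGraph ℕ)
    (hcomp : ∀ c : H.ConnectedComponent,
      (∃ n : ℕ, Nonempty (H.induce c.supp ≃g SimpleGraph.pathGraph (n + 1))) ∨
      (∃ H' : SimpleGraph ℕ, IsSubdivision (starN 3) H' ∧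
        Nonempty (H.induce c.supp ≃g H'.induce H'.support))) :
    ∀ G : SimpleGraph ℕ, MinorOf H G ↔ SubgraphOf H G := by
  refine fun G => ⟨fun ⟨φ, _, hconn, hdisj, hadj⟩ => ?_, SubgraphOf.minorOf⟩
  refine MinorModel.subgraphOf_of_forall_connectedComponent ⟨φ, hconn, hdisj, hadj⟩ fun c => ?_
  rcases hcomp c with ⟨n, ⟨e⟩⟩ | ⟨H', hH', ⟨e⟩⟩
  · exact MinorModel.hasCopyInBranchSets_of_iso e MinorModel.hasCopyInBranchSets_pathGraph _
  · obtain ⟨ℓ, A, hA⟩ := hH'.exists_isSpider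
    obtain ⟨A', hA', hsurj⟩ := hA.induce_support
    exact MinorModel.hasCopyInBranchSets_of_iso e
      (MinorModel.hasCopyInBranchSets_of_isSpider hA' hsurj) _
end

section
/- Deleting an internal edge (u,v) of a graph G and attaching two new disjoint dangling paths, one at u and one at v, strictly decreases the number of internal edges: if H is the resulting graph, then β(H) < β(G). -/
open SimpleGraph

/-!
Every edge of `H` at a new vertex is the only edge leaving some tail `{p k, …, p a}` or
`{q k, …, q b}` of one of the new paths. A trail whose ends lie on the same side of such a cut
cannot use its boundary edge, because it would have to cross back over a second one. Cycles, and
paths between vertices of degree at least 3 (new vertices have degree at most 2), therefore use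
only edges of `G` other than `(u,v)`, and no old vertex has larger degree in `H` than in `G`. So
every internal edge of `H` is internal in `G`, whereas `(u,v)` is internal in `G` and not an edge
of `H`.
-/

namespace SimpleGraph

variable {V : Type*} {G : SimpleGraph V}

def edgeBoundary (G : SimpleGraph V) (S : Set V) : Set (Sym2 V) :=
  {e | ∃ x ∈ S, ∃ y ∉ S, G.Adj x y ∧ e = s(x, y)}

theorem edgeBoundary_compl (S : Set V) : G.edgeBoundary Sᶜ = G.edgeBoundary S := by
  ext e
  constructor <;>
  · rintro ⟨x, hx, y, hy, hxy, rfl⟩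
    exact ⟨y, by simpa using hy, x, by simpa using hx, hxy.symm, Sym2.eq_swap⟩

theorem Walk.IsTrail.support_subset_compl {S : Set V} (hS : (G.edgeBoundary S).Subsingleton)
    {x y : V} {w : G.Walk x y} (hw : w.IsTrail) (hx : x ∉ S) (hy : y ∉ S) :
    ∀ z ∈ w.support, z ∉ S := by
  induction w with
  | nil => simpa using hx
  | @cons x m y hxm w ih =>
    rw [Walk.isTrail_cons] at hw
    by_cases hm : m ∈ S
    · obtain ⟨d, hd, hdS, hdS'⟩ := w.exists_boundary_dart S hm hy
      have hexit : d.edge = s(x, m) :=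
        hS ⟨_, hdS, _, hdS', d.adj, rfl⟩ ⟨m, hm, x, hx, hxm.symm, Sym2.eq_swap⟩
      exact (hw.2 (hexit ▸ List.mem_map_of_mem hd)).elim
    · simpa [hx] using ih hw.1 hm hy

theorem Walk.IsTrail.notMem_edgeBoundary {S : Set V} (hS : (G.edgeBoundary S).Subsingleton)
    {x y : V} {w : G.Walk x y} (hw : w.IsTrail) (hxy : x ∈ S ↔ y ∈ S) :
    ∀ e ∈ w.edges, e ∉ G.edgeBoundary S := by
  rintro _ he ⟨a, ha, b, hb, -, rfl⟩
  by_cases hx : x ∈ S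
  · rw [← edgeBoundary_compl] at hS
    exact hw.support_subset_compl hS (not_not.2 hx) (not_not.2 (hxy.1 hx)) b
      (w.snd_mem_support_of_mem_edges he) hb
  · exact hw.support_subset_compl hS hx (hxy.not.1 hx) a (w.fst_mem_support_of_mem_edges he) ha

theorem Walk.IsTrail.forall_mem_edgeSet_of_cuts {H : SimpleGraph V} {N : Set V}
    (hold : ∀ e ∈ H.edgeSet, (∀ z ∈ e, z ∉ N) → e ∈ G.edgeSet)
    (hcut : ∀ e ∈ H.edgeSet, ∀ z ∈ e, z ∈ N →
      ∃ S ⊆ N, (H.edgeBoundary S).Subsingleton ∧ e ∈ H.edgeBoundary S)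
    {x y : V} {w : H.Walk x y} (hw : w.IsTrail) (hxy : ∀ S ⊆ N, x ∈ S ↔ y ∈ S) :
    ∀ e ∈ w.edges, e ∈ G.edgeSet := by
  intro e he
  refine hold e (w.edges_subset_edgeSet he) fun z hz hzN => ?_
  obtain ⟨S, hSN, hS, heS⟩ := hcut e (w.edges_subset_edgeSet he) z hz hzN
  exact hw.notMem_edgeBoundary hS (hxy S hSN) e he heS

theorem ncard_neighborSet_le_two {S T : Set V} (hS : (G.edgeBoundary S).Subsingleton)
    (hT : (G.edgeBoundary T).Subsingleton) {x : V} (hxS : x ∈ S) (hxT : x ∉ T)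
    (hST : ∀ y ∈ S, y ∉ T → y = x) : (G.neighborSet x).ncard ≤ 2 := by
  set A := {y | s(x, y) ∈ G.edgeBoundary S}
  set B := {y | s(y, x) ∈ G.edgeBoundary T}
  have hA : A.Subsingleton := fun y hy y' hy' => Sym2.congr_right.1 (hS hy hy')
  have hB : B.Subsingleton := fun y hy y' hy' => Sym2.congr_left.1 (hT hy hy')
  have hsub : G.neighborSet x ⊆ A ∪ B := by
    intro y hxy
    by_cases hyS : y ∈ S
    · have hyT : y ∈ T := by_contra fun hyT => hxy.ne (hST y hyS hyT).symm
      exact .inr ⟨y, hyT, x, hxT, hxy.symm, rfl⟩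
    · exact .inl ⟨x, hxS, y, hyS, hxy, rfl⟩
  calc (G.neighborSet x).ncard ≤ (A ∪ B).ncard :=
        Set.ncard_le_ncard hsub (hA.finite.union hB.finite)
    _ ≤ A.ncard + B.ncard := Set.ncard_union_le A B
    _ ≤ 1 + 1 := add_le_add ((Set.ncard_le_one hA.finite).2 hA) ((Set.ncard_le_one hB.finite).2 hB)

end SimpleGraph

open SimpleGraph Set

section DanglingPath

variable {V : Type*} {n : ℕ}

def danglingPathEdges (u : V) (p : Fin (n + 1) → V) : Set (Sym2 V) :=
  {e | e = s(u, p 0) ∨ ∃ i j : Fin (n + 1), (j : ℕ) = (i : ℕ) + 1 ∧ e = s(p i, p j)}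

def pathTail (p : Fin (n + 1) → V) (k : ℕ) : Set V := p '' {i | k ≤ (i : ℕ)}

variable {u x y z : V} {p : Fin (n + 1) → V} {e : Sym2 V}

theorem eq_or_mem_range_of_mem_danglingPathEdges (he : e ∈ danglingPathEdges u p) (hz : z ∈ e) :
    z = u ∨ z ∈ range p := by
  rcases he with rfl | ⟨i, j, -, rfl⟩ <;> rcases Sym2.mem_iff.1 hz with rfl | rfl
  exacts [.inl rfl, .inr ⟨0, rfl⟩, .inr ⟨i, rfl⟩, .inr ⟨j, rfl⟩]

theorem exists_mem_range_of_mem_danglingPathEdges (he : e ∈ danglingPathEdges u p) :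
    ∃ z ∈ e, z ∈ range p := by
  rcases he with rfl | ⟨i, j, -, rfl⟩
  exacts [⟨p 0, Sym2.mem_mk_right _ _, 0, rfl⟩, ⟨p i, Sym2.mem_mk_left _ _, i, rfl⟩]

theorem eq_and_eq_of_mk_mem_danglingPathEdges (hx : x ∉ range p)
    (h : s(x, y) ∈ danglingPathEdges u p) : x = u ∧ y = p 0 := by
  rcases h with h | ⟨i, j, -, h⟩ <;> rw [Sym2.eq_iff] at h
  · exact h.resolve_right fun h => hx ⟨0, h.1.symm⟩
  · exact (h.elim (fun h => hx ⟨i, h.1.symm⟩) (fun h => hx ⟨j, h.1.symm⟩)).elim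

theorem pathTail_subset_range (k : ℕ) : pathTail p k ⊆ range p := image_subset_range _ _

theorem Function.Injective.mem_pathTail_iff (hp : p.Injective) {i : Fin (n + 1)} {k : ℕ} :
    p i ∈ pathTail p k ↔ k ≤ i :=
  hp.mem_set_image

theorem mk_eq_of_mem_danglingPathEdges_of_mem_pathTail (hp : p.Injective) (hu : u ∉ range p)
    {k : ℕ} (he : s(x, y) ∈ danglingPathEdges u p) (hx : x ∈ pathTail p k)
    (hy : y ∉ pathTail p k) :
    (k = 0 ∧ s(x, y) = s(u, p 0)) ∨
      ∃ i j : Fin (n + 1), ((j : ℕ) = i + 1 ∧ (j : ℕ) = k) ∧ s(x, y) = s(p i, p j) := by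
  obtain ⟨i, hi : k ≤ (i : ℕ), rfl⟩ := hx
  rcases he with h | ⟨i', j', hij, h⟩
  · refine .inl ⟨?_, h⟩
    obtain ⟨hiu, -⟩ | ⟨hi0, -⟩ := Sym2.eq_iff.1 h
    · exact (hu ⟨i, hiu⟩).elim
    · have : i = 0 := hp hi0
      subst this
      simpa using hi
  · refine .inr ⟨i', j', ⟨hij, ?_⟩, h⟩
    obtain ⟨hii, rfl⟩ | ⟨hij', rfl⟩ := Sym2.eq_iff.1 h
    · rw [hp.mem_pathTail_iff] at hy
      have := congrArg Fin.val (hp hii)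
      omega
    · rw [hp.mem_pathTail_iff] at hy
      have := congrArg Fin.val (hp hij')
      omega

/-- The edges of `H` at the vertices of `p` are among those of the path `u, p 0, …, p n`
(which need not all be present). -/
structure SimpleGraph.IsDanglingPath (H : SimpleGraph V) (u : V) (p : Fin (n + 1) → V) : Prop where
  injective : p.Injective
  notMem_range : u ∉ range p
  mem_danglingPathEdges : ∀ e ∈ H.edgeSet, ∀ z ∈ e, z ∈ range p → e ∈ danglingPathEdges u p

namespace SimpleGraph.IsDanglingPath

variable {H : SimpleGraph V}

theorem edgeBoundary_pathTail_subsingleton (hP : H.IsDanglingPath u p) (k : ℕ) :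
    (H.edgeBoundary (pathTail p k)).Subsingleton := by
  have crossing : ∀ e ∈ H.edgeBoundary (pathTail p k), (k = 0 ∧ e = s(u, p 0)) ∨
      ∃ i j : Fin (n + 1), ((j : ℕ) = i + 1 ∧ (j : ℕ) = k) ∧ e = s(p i, p j) := by
    rintro _ ⟨x, hx, y, hy, hxy, rfl⟩
    exact mk_eq_of_mem_danglingPathEdges_of_mem_pathTail hP.injective hP.notMem_range
      (hP.mem_danglingPathEdges _ hxy x (Sym2.mem_mk_left x y) (pathTail_subset_range k hx)) hx hy
  intro e he e' he'
  rcases crossing e he with ⟨hk, rfl⟩ | ⟨i, j, hij, rfl⟩ <;>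
    rcases crossing e' he' with ⟨hk', rfl⟩ | ⟨i', j', hij', rfl⟩
  · rfl
  · omega
  · omega
  · obtain rfl : j = j' := Fin.ext (by omega)
    obtain rfl : i = i' := Fin.ext (by omega)
    rfl

theorem exists_edgeBoundary (hP : H.IsDanglingPath u p) {e : Sym2 V} (he : e ∈ H.edgeSet)
    {z : V} (hz : z ∈ e) (hzp : z ∈ range p) :
    ∃ S ⊆ range p, (H.edgeBoundary S).Subsingleton ∧ e ∈ H.edgeBoundary S := by
  have hmem {i : Fin (n + 1)} {k : ℕ} := hP.injective.mem_pathTail_iff (i := i) (k := k)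
  rcases hP.mem_danglingPathEdges e he z hz hzp with rfl | ⟨i, j, hij, rfl⟩
  · refine ⟨pathTail p 0, pathTail_subset_range 0, hP.edgeBoundary_pathTail_subsingleton 0,
      p 0, hmem.2 le_rfl, u, fun h => hP.notMem_range (pathTail_subset_range 0 h),
      ((mem_edgeSet H).1 he).symm, Sym2.eq_swap⟩
  · refine ⟨pathTail p j, pathTail_subset_range j, hP.edgeBoundary_pathTail_subsingleton j,
      p j, hmem.2 le_rfl, p i, by rw [hmem]; omega, ((mem_edgeSet H).1 he).symm, Sym2.eq_swap⟩

theorem ncard_neighborSet_le_two (hP : H.IsDanglingPath u p) (i : Fin (n + 1)) :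
    (H.neighborSet (p i)).ncard ≤ 2 :=
  SimpleGraph.ncard_neighborSet_le_two (hP.edgeBoundary_pathTail_subsingleton i)
    (hP.edgeBoundary_pathTail_subsingleton (i + 1)) (hP.injective.mem_pathTail_iff.2 le_rfl)
    (by rw [hP.injective.mem_pathTail_iff]; omega)
    (by rintro _ ⟨j, hj : (i : ℕ) ≤ j, rfl⟩ hj'; rw [hP.injective.mem_pathTail_iff] at hj'
        exact congrArg p (Fin.ext (by omega)))

end SimpleGraph.IsDanglingPath

end DanglingPath

theorem InternalEdge.of_cuts {G H : SimpleGraph ℕ} {N : Set ℕ}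
    (hold : ∀ e ∈ H.edgeSet, (∀ z ∈ e, z ∉ N) → e ∈ G.edgeSet)
    (hcut : ∀ e ∈ H.edgeSet, ∀ z ∈ e, z ∈ N →
      ∃ S ⊆ N, (H.edgeBoundary S).Subsingleton ∧ e ∈ H.edgeBoundary S)
    (hdegN : ∀ x ∈ N, degN H x ≤ 2) (hdeg : ∀ x ∉ N, degN H x ≤ degN G x) {e : Sym2 ℕ}
    (he : InternalEdge H e) : InternalEdge G e := by
  obtain ⟨-, ⟨x, c, hc, hec⟩ | ⟨x, y, w, hw, hew, hx, hy⟩⟩ := he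
  · have hcG := hc.isTrail.forall_mem_edgeSet_of_cuts hold hcut fun _ _ => Iff.rfl
    exact ⟨hcG e hec, .inl ⟨x, c.transfer G hcG, hc.transfer hcG, by rwa [Walk.edges_transfer]⟩⟩
  · have hxN : x ∉ N := fun h => by have := hdegN x h; omega
    have hyN : y ∉ N := fun h => by have := hdegN y h; omega
    have hwG := hw.isTrail.forall_mem_edgeSet_of_cuts hold hcut fun S hS =>
      iff_of_false (fun h => hxN (hS h)) (fun h => hyN (hS h))
    exact ⟨hwG e hew, .inr ⟨x, y, w.transfer G hwG, hw.transfer hwG,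
      by rwa [Walk.edges_transfer], hx.trans (hdeg x hxN), hy.trans (hdeg y hyN)⟩⟩

theorem InternalEdge.of_isDanglingPath {G H : SimpleGraph ℕ} {u v m n : ℕ}
    {p : Fin (m + 1) → ℕ} {q : Fin (n + 1) → ℕ} (hP : H.IsDanglingPath u p)
    (hQ : H.IsDanglingPath v q)
    (hold : ∀ e ∈ H.edgeSet, (∀ z ∈ e, z ∉ range p ∪ range q) → e ∈ G.edgeSet)
    (hdeg : ∀ x ∉ range p ∪ range q, degN H x ≤ degN G x) {e : Sym2 ℕ}
    (he : InternalEdge H e) : InternalEdge G e := by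
  refine he.of_cuts hold ?_ ?_ hdeg
  · rintro e he z hz (hzp | hzq)
    · obtain ⟨S, hS, h⟩ := hP.exists_edgeBoundary he hz hzp
      exact ⟨S, hS.trans subset_union_left, h⟩
    · obtain ⟨S, hS, h⟩ := hQ.exists_edgeBoundary he hz hzq
      exact ⟨S, hS.trans subset_union_right, h⟩
  · rintro x (⟨i, rfl⟩ | ⟨i, rfl⟩)
    exacts [hP.ncard_neighborSet_le_two i, hQ.ncard_neighborSet_le_two i]

theorem beta_lt_of_forall_internalEdge {G H : SimpleGraph ℕ} (hfin : G.edgeSet.Finite)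
    (hsub : ∀ e, InternalEdge H e → InternalEdge G e) {e : Sym2 ℕ} (he : InternalEdge G e)
    (heH : e ∉ H.edgeSet) : beta H < beta G :=
  ncard_lt_ncard ⟨hsub, fun h => heH (h he).1⟩ (hfin.subset fun _ he => he.1)

section Construction

variable {V : Type*} {m n : ℕ} {G H : SimpleGraph V} {u v x y : V} {p : Fin (m + 1) → V}
  {q : Fin (n + 1) → V}

theorem forall_notMem_range_of_neighborSet_eq_empty (h : ∀ i, G.neighborSet (p i) = ∅) :
    ∀ e ∈ G.edgeSet, ∀ z ∈ e, z ∉ range p := by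
  rintro e he z hz ⟨i, rfl⟩
  obtain ⟨y, rfl⟩ := Sym2.mem_iff_exists.1 hz
  have hy : y ∈ G.neighborSet (p i) := he
  simp [h i] at hy

theorem isDanglingPath_of_edgeSet_subset (hp : p.Injective) (huv : G.Adj u v)
    (hGp : ∀ e ∈ G.edgeSet, ∀ z ∈ e, z ∉ range p) (hpq : Disjoint (range p) (range q))
    (hH : H.edgeSet ⊆ (G.edgeSet \ {s(u, v)}) ∪ danglingPathEdges u p ∪ danglingPathEdges v q) :
    H.IsDanglingPath u p where
  injective := hp
  notMem_range := hGp _ huv u (Sym2.mem_mk_left u v)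
  mem_danglingPathEdges e he z hz hzp := by
    rcases hH he with (heG | heP) | heQ
    · exact (hGp e heG.1 z hz hzp).elim
    · exact heP
    · rcases eq_or_mem_range_of_mem_danglingPathEdges heQ hz with rfl | hzq
      · exact (hGp _ huv z (Sym2.mem_mk_right u z) hzp).elim
      · exact (hpq.notMem_of_mem_left hzp hzq).elim

theorem mem_of_mem_union_danglingPathEdges {A : Set (Sym2 V)} {e : Sym2 V}
    (he : e ∈ A ∪ danglingPathEdges u p ∪ danglingPathEdges v q)
    (hN : ∀ z ∈ e, z ∉ range p ∪ range q) : e ∈ A := by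
  rcases he with (heA | heP) | heQ
  · exact heA
  · obtain ⟨z, hz, hzp⟩ := exists_mem_range_of_mem_danglingPathEdges heP
    exact (hN z hz (.inl hzp)).elim
  · obtain ⟨z, hz, hzq⟩ := exists_mem_range_of_mem_danglingPathEdges heQ
    exact (hN z hz (.inr hzq)).elim

theorem adj_or_of_mem_neighborSet
    (hH : H.edgeSet ⊆ (G.edgeSet \ {s(u, v)}) ∪ danglingPathEdges u p ∪ danglingPathEdges v q)
    (hxp : x ∉ range p) (hxq : x ∉ range q) (hy : y ∈ H.neighborSet x) :
    (G.Adj x y ∧ s(x, y) ≠ s(u, v)) ∨ (x = u ∧ y = p 0) ∨ (x = v ∧ y = q 0) := by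
  rcases hH (show s(x, y) ∈ H.edgeSet from hy) with (hG | hP) | hQ
  · exact .inl hG
  · exact .inr (.inl (eq_and_eq_of_mk_mem_danglingPathEdges hxp hP))
  · exact .inr (.inr (eq_and_eq_of_mk_mem_danglingPathEdges hxq hQ))

theorem neighborSet_subset_insert (huv : u ≠ v)
    (hH : H.edgeSet ⊆ (G.edgeSet \ {s(u, v)}) ∪ danglingPathEdges u p ∪ danglingPathEdges v q)
    (hup : u ∉ range p) (huq : u ∉ range q) :
    H.neighborSet u ⊆ insert (p 0) (G.neighborSet u \ {v}) := by
  intro y hy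
  rcases adj_or_of_mem_neighborSet hH hup huq hy with ⟨hG, hne⟩ | ⟨-, rfl⟩ | ⟨h, -⟩
  · exact .inr ⟨hG, fun h => hne (by rw [Set.mem_singleton_iff.1 h])⟩
  · exact .inl rfl
  · exact (huv h).elim

end Construction

theorem degN_le_of_neighborSet_subset_insert {G H : SimpleGraph ℕ} {x y w : ℕ}
    (hfin : (G.neighborSet x).Finite) (hxw : G.Adj x w)
    (h : H.neighborSet x ⊆ insert y (G.neighborSet x \ {w})) : degN H x ≤ degN G x :=
  calc degN H x ≤ (insert y (G.neighborSet x \ {w})).ncard := ncard_le_ncard h (hfin.sdiff.insert y)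
    _ ≤ (G.neighborSet x \ {w}).ncard + 1 := ncard_insert_le _ _
    _ = degN G x := ncard_sdiff_singleton_add_one hxw hfin

theorem degN_le_degN_of_notMem {G H : SimpleGraph ℕ} {u v x m n : ℕ} {p : Fin (m + 1) → ℕ}
    {q : Fin (n + 1) → ℕ} (hfin : G.edgeSet.Finite) (huv : G.Adj u v)
    (hH : H.edgeSet ⊆ (G.edgeSet \ {s(u, v)}) ∪ danglingPathEdges u p ∪ danglingPathEdges v q)
    (hH' : H.edgeSet ⊆ (G.edgeSet \ {s(v, u)}) ∪ danglingPathEdges v q ∪ danglingPathEdges u p)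
    (hx : x ∉ range p ∪ range q) : degN H x ≤ degN G x := by
  have hfinx : (G.neighborSet x).Finite :=
    hfin.preimage (f := (s(x, ·))) fun _ _ _ _ => Sym2.congr_right.1
  obtain ⟨hxp, hxq⟩ := not_or.1 hx
  by_cases hxu : x = u
  · subst hxu
    exact degN_le_of_neighborSet_subset_insert hfinx huv
      (neighborSet_subset_insert huv.ne hH hxp hxq)
  by_cases hxv : x = v
  · subst hxv
    exact degN_le_of_neighborSet_subset_insert hfinx huv.symm
      (neighborSet_subset_insert huv.ne' hH' hxq hxp)
  refine ncard_le_ncard (fun y hy => ?_) hfinx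
  rcases adj_or_of_mem_neighborSet hH hxp hxq hy with ⟨hG, -⟩ | ⟨h, -⟩ | ⟨h, -⟩
  exacts [hG, (hxu h).elim, (hxv h).elim]

/-- Deleting an internal edge `(u,v)` of a finite graph `G` and attaching two
new disjoint dangling paths, one at `u` (through the fresh vertices
`p 0, p 1, …, p a`) and one at `v` (through the fresh vertices
`q 0, q 1, …, q b`), strictly decreases the number of internal edges. -/
theorem beta_lt_of_delete_internal_add_paths (G : SimpleGraph ℕ)
    (hfin : G.edgeSet.Finite) (u v : ℕ) (hint : InternalEdge G s(u, v))
    (a b : ℕ) (p : Fin (a + 1) → ℕ) (q : Fin (b + 1) → ℕ)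
    (hp : Function.Injective p) (hq : Function.Injective q)
    (hpq : ∀ i j, p i ≠ q j)
    (hpiso : ∀ i, G.neighborSet (p i) = ∅)
    (hqiso : ∀ i, G.neighborSet (q i) = ∅)
    (H : SimpleGraph ℕ)
    (hH : H = SimpleGraph.fromEdgeSet ((G.edgeSet \ {s(u, v)})
      ∪ {e | e = s(u, p 0) ∨ ∃ i j : Fin (a + 1), (j : ℕ) = (i : ℕ) + 1 ∧ e = s(p i, p j)}
      ∪ {e | e = s(v, q 0) ∨ ∃ i j : Fin (b + 1), (j : ℕ) = (i : ℕ) + 1 ∧ e = s(q i, q j)})) :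
    beta H < beta G := by
  have huv : G.Adj u v := hint.1
  have hGp := forall_notMem_range_of_neighborSet_eq_empty hpiso
  have hGq := forall_notMem_range_of_neighborSet_eq_empty hqiso
  have hdisj : Disjoint (range p) (range q) := disjoint_range_iff.2 hpq
  have hE : H.edgeSet ⊆
      (G.edgeSet \ {s(u, v)}) ∪ danglingPathEdges u p ∪ danglingPathEdges v q := by
    subst hH
    exact (edgeSet_fromEdgeSet _).trans_subset sdiff_subset
  have hE' : H.edgeSet ⊆
      (G.edgeSet \ {s(v, u)}) ∪ danglingPathEdges v q ∪ danglingPathEdges u p := by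
    rwa [Sym2.eq_swap, union_right_comm]
  have hold : ∀ e ∈ H.edgeSet, (∀ z ∈ e, z ∉ range p ∪ range q) → e ∈ G.edgeSet \ {s(u, v)} :=
    fun e he => mem_of_mem_union_danglingPathEdges (hE he)
  have hP := isDanglingPath_of_edgeSet_subset hp huv hGp hdisj hE
  have hQ := isDanglingPath_of_edgeSet_subset hq huv.symm hGq hdisj.symm hE'
  refine beta_lt_of_forall_internalEdge hfin
    (fun e he => he.of_isDanglingPath hP hQ (fun e he hN => (hold e he hN).1)
      fun x hx => degN_le_degN_of_notMem hfin huv hE hE' hx) hint fun huvH => ?_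
  exact (hold _ huvH fun z hz hN => hN.elim (hGp _ huv z hz) (hGq _ huv z hz)).2 rfl
end
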